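/- arXiv:2412.15420 — 9 statements merged into one kernel-verified Lean document; each statement's English description precedes it below -/
import Mathlib

section
/- Define a_k = ∑_{m=0}^{k} 2^m · C(2k−m, m) for k ≥ 0 and b_k = a_k − a_{k−1} for k ≥ 2. Then b_k = 4·b_{k−1} for all k ≥ 3, and consequently b_k = 2^{2k−1} for all k ≥ 2. -/
/-!
Put `J n = ∑_{i + j = n} 2^j C(i, j)`, the diagonal sums of Pascal's triangle weighted by powers
of 2, so that `a k = J (2k)`. Pascal's rule gives the Jacobsthal recursion
`J (n + 2) = J (n + 1) + 2 J n`, whence `3 J n = 2^(n+1) + (-1)^n`. Thus `3 a k = 2^(2k+1) + 1`,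
and the differences are `b k = 2^(2k-1)`, which already satisfy `b k = 4 b (k - 1)`.
-/

open Finset

variable {R : Type*} [CommSemiring R]

def diagChooseSum (x : R) (n : ℕ) : R :=
  ∑ p ∈ antidiagonal n, x ^ p.2 * p.1.choose p.2

theorem diagChooseSum_add_two (x : R) (n : ℕ) :
    diagChooseSum x (n + 2) = diagChooseSum x (n + 1) + x * diagChooseSum x n := by
  simp only [diagChooseSum]
  rw [Nat.antidiagonal_succ_succ', Nat.antidiagonal_succ']
  simp only [sum_cons, sum_map, Function.Embedding.coe_prodMap, Function.Embedding.coeFn_mk,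
    Function.Embedding.refl_apply, Prod.map_fst, Prod.map_snd, Nat.choose_succ_succ, Nat.cast_add,
    Nat.choose_zero_succ, Nat.choose_zero_right, Nat.cast_zero, Nat.cast_one, pow_zero, pow_succ',
    mul_zero, mul_one, zero_add, mul_add, sum_add_distrib, mul_sum, mul_assoc]
  ring

theorem diagChooseSum_eq_sum_range (x : R) {n N : ℕ} (h : n < 2 * N) :
    diagChooseSum x n = ∑ m ∈ range N, x ^ m * ((n - m).choose m : R) := by
  have hvanish : ∀ M, n / 2 < M → ∑ m ∈ range M, x ^ m * ((n - m).choose m : R) =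
      ∑ m ∈ range (n / 2 + 1), x ^ m * ((n - m).choose m : R) := fun M hM =>
    eventually_constant_sum (fun m hm => by
      rw [Nat.choose_eq_zero_of_lt (by omega), Nat.cast_zero, mul_zero]) hM
  rw [diagChooseSum, ← Nat.sum_antidiagonal_swap]
  simp only [Prod.fst_swap, Prod.snd_swap]
  rw [Nat.sum_antidiagonal_eq_sum_range_succ (fun i j => x ^ i * (j.choose i : R)),
    hvanish (n + 1) (by omega), hvanish N (by omega)]

theorem three_mul_diagChooseSum_two (n : ℕ) :
    3 * diagChooseSum (2 : ℤ) n = 2 ^ (n + 1) + (-1) ^ n := by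
  induction n using Nat.twoStepInduction with
  | zero => simp [diagChooseSum]
  | one => simp [diagChooseSum, Nat.antidiagonal_succ]
  | more n ih₀ ih₁ =>
    rw [diagChooseSum_add_two, mul_add, ih₁, mul_left_comm, ih₀]
    ring

/-- With `a k = ∑_{m=0}^{k} 2^m C(2k−m, m)` and `b k = a k − a (k−1)`,
one has `b k = 4 b (k−1)` for `k ≥ 3` and `b k = 2^(2k−1)` for `k ≥ 2`. -/
theorem b_recursion_and_closed_form
    (a : ℕ → ℤ)
    (ha : ∀ k, a k = ∑ m ∈ Finset.range (k + 1), 2 ^ m * (Nat.choose (2 * k - m) m : ℤ))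
    (b : ℕ → ℤ)
    (hb : ∀ k, b k = a k - a (k - 1)) :
    (∀ k, 3 ≤ k → b k = 4 * b (k - 1)) ∧ (∀ k, 2 ≤ k → b k = 2 ^ (2 * k - 1)) := by
  have three_mul_a : ∀ k, 3 * a k = 2 ^ (2 * k + 1) + 1 := fun k => by
    rw [ha, ← diagChooseSum_eq_sum_range _ (by omega), three_mul_diagChooseSum_two,
      pow_mul, neg_one_sq, one_pow]
  have b_succ : ∀ k, b (k + 1) = 2 ^ (2 * k + 1) := fun k => by
    have h₁ := three_mul_a (k + 1)
    have h₀ := three_mul_a k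
    rw [hb, Nat.add_sub_cancel]
    rw [show 2 * (k + 1) + 1 = 2 * k + 1 + 2 by ring, pow_add] at h₁
    linarith
  have closed_form : ∀ k, 1 ≤ k → b k = 2 ^ (2 * k - 1) := fun k hk => by
    obtain ⟨j, rfl⟩ := Nat.exists_eq_add_of_le' hk
    rw [b_succ, show 2 * (j + 1) - 1 = 2 * j + 1 by omega]
  refine ⟨fun k hk => ?_, fun k hk => closed_form k (by omega)⟩
  rw [closed_form k (by omega), closed_form (k - 1) (by omega),
    show 2 * k - 1 = 2 * (k - 1) - 1 + 2 by omega, pow_add]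
  ring
end

section
/- Define ā_k = ∑_{m=0}^{k} 2^m · C(2k+1−m, m) for k ≥ 0 and b̄_k = ā_k − ā_{k−1} for k ≥ 2. Then b̄_k = 2^{2k} for all k ≥ 2, and hence ā_k = 5 + ∑_{m=2}^{k} 2^{2m} for k ≥ 2. -/
/-!
Reading `ā_k` along a diagonal of Pascal's triangle, `ā_k = S (2k+1)` with
`S n = ∑_m 2^m C(n-m, m)`. Pascal's rule gives `S (n+2) = S (n+1) + 2 S n`, whose characteristic
roots are `2` and `-1`, so `3 S n = 2^(n+1) + (-1)^n` and `3 ā_k = 4^(k+1) - 1`. Consecutive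
differences are then `4^k`, and summing them from `ā_1 = 5` gives the closed form.
-/

open Finset

/-- The Jacobsthal polynomial `J_(n+1)(x)`; at `x = 1` it is `Nat.fib (n + 1)`. -/
def choosePowSum {R : Type*} [CommSemiring R] (x : R) (n : ℕ) : R :=
  ∑ p ∈ antidiagonal n, x ^ p.1 * p.2.choose p.1

variable {R : Type*}

section
variable [CommSemiring R]

theorem choosePowSum_add_two (x : R) (n : ℕ) :
    choosePowSum x (n + 2) = choosePowSum x (n + 1) + x * choosePowSum x n := by
  rw [choosePowSum, Nat.antidiagonal_succ_succ', sum_cons, sum_cons, sum_map, choosePowSum,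
    Nat.sum_antidiagonal_succ, choosePowSum, mul_sum]
  simp [Nat.choose_succ_succ, mul_add, sum_add_distrib, pow_succ', mul_assoc, add_comm, add_left_comm]

theorem choosePowSum_eq_sum_range (x : R) {n N : ℕ} (hn : n < 2 * N) (hN : N ≤ n + 1) :
    choosePowSum x n = ∑ m ∈ range N, x ^ m * (n - m).choose m := by
  rw [choosePowSum, Nat.sum_antidiagonal_eq_sum_range_succ_mk]
  refine (sum_subset (range_subset_range.2 hN) fun m _ hm => ?_).symm
  rw [Nat.choose_eq_zero_of_lt (by simp at hm; omega), Nat.cast_zero, mul_zero]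

end

theorem three_mul_choosePowSum_two [CommRing R] (n : ℕ) :
    3 * choosePowSum (2 : R) n = 2 ^ (n + 1) + (-1) ^ n := by
  induction n using Nat.twoStepInduction with
  | zero => norm_num [choosePowSum]
  | one => norm_num [choosePowSum, Nat.antidiagonal_succ]
  | more n ih₀ ih₁ =>
    rw [choosePowSum_add_two]
    linear_combination ih₁ + 2 * ih₀

theorem three_mul_sum_range_two_pow_mul_choose [CommRing R] (k : ℕ) :
    3 * ∑ m ∈ range (k + 1), (2 : R) ^ m * (2 * k + 1 - m).choose m = 4 ^ (k + 1) - 1 := by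
  rw [← choosePowSum_eq_sum_range _ (by omega) (by omega), three_mul_choosePowSum_two,
    (by ring : 2 * k + 1 + 1 = 2 * (k + 1)), pow_mul, Odd.neg_one_pow (odd_two_mul_add_one k)]
  norm_num [sub_eq_add_neg]

/-- With `ā k = ∑_{m=0}^{k} 2^m C(2k+1−m, m)` and `b̄ k = ā k − ā (k−1)`,
one has `b̄ k = 2^(2k)` for `k ≥ 2`, hence `ā k = 5 + ∑_{m=2}^{k} 2^(2m)` for `k ≥ 2`. -/
theorem abar_recursion_and_closed_form
    (abar : ℕ → ℤ)
    (habar : ∀ k, abar k = ∑ m ∈ Finset.range (k + 1), 2 ^ m * (Nat.choose (2 * k + 1 - m) m : ℤ))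
    (bbar : ℕ → ℤ)
    (hbbar : ∀ k, bbar k = abar k - abar (k - 1)) :
    (∀ k, 2 ≤ k → bbar k = 2 ^ (2 * k)) ∧
    (∀ k, 2 ≤ k → abar k = 5 + ∑ m ∈ Finset.Icc 2 k, 2 ^ (2 * m)) := by
  have three_mul_abar (k : ℕ) : 3 * abar k = 4 ^ (k + 1) - 1 := by
    rw [habar, three_mul_sum_range_two_pow_mul_choose]
  have bbar_succ (k : ℕ) : bbar (k + 1) = 2 ^ (2 * (k + 1)) := by
    rw [hbbar, Nat.add_sub_cancel, pow_mul, (by norm_num : (2 : ℤ) ^ 2 = 4)]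
    linarith [three_mul_abar k, three_mul_abar (k + 1), pow_succ (4 : ℤ) (k + 1)]
  have abar_eq (k : ℕ) (hk : 1 ≤ k) : abar k = 5 + ∑ m ∈ Icc 2 k, 2 ^ (2 * m) := by
    induction k, hk using Nat.le_induction with
    | base =>
      have := three_mul_abar 1
      norm_num at this ⊢
      omega
    | succ k hk ih =>
      rw [sum_Icc_succ_top (by omega), ← bbar_succ, hbbar, Nat.add_sub_cancel, ih]
      ring
  refine ⟨fun k hk => ?_, fun k hk => abar_eq k (by omega)⟩
  obtain ⟨j, rfl⟩ : ∃ j, k = j + 1 := ⟨k - 1, by omega⟩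
  exact bbar_succ j
end

section
/- For every integer i ≥ 0, the quantity c_i = ∑_{(m,n): m+n=i, 0 ≤ m ≤ n} 2^{-n} C(n, m) satisfies 1/2 ≤ c_i ≤ 1. -/
/-!
Writing `c i = ∑_{k+n=i} 2^{-n} C(n,k)` (the condition `k ≤ n` only discards zero terms),
Pascal's rule gives the Fibonacci-type recurrence `c (i+2) = (c (i+1) + c i) / 2`, so every
`c i` is an average of the two before it. Since `c 0 = 1` and `c 1 = 1/2`, all `c i` stay in
`[1/2, 1]`.
-/

open Finset

/-- With `x = 1` this is `Nat.fib (n + 1)`, see `Nat.fib_succ_eq_sum_choose`. -/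
def weightedFibSum {R : Type*} [CommSemiring R] (x : R) (n : ℕ) : R :=
  ∑ p ∈ antidiagonal n, x ^ p.1 * (p.1.choose p.2 : R)

section WeightedFibSum

variable {R : Type*} [CommSemiring R] (x : R)

@[simp]
theorem weightedFibSum_zero : weightedFibSum x 0 = 1 := by
  simp [weightedFibSum]

@[simp]
theorem weightedFibSum_one : weightedFibSum x 1 = x := by
  simp [weightedFibSum, Nat.antidiagonal_succ]

theorem weightedFibSum_add_two (n : ℕ) :
    weightedFibSum x (n + 2) = x * (weightedFibSum x (n + 1) + weightedFibSum x n) := by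
  have peel_succ (m : ℕ) : weightedFibSum x (m + 1) =
      x ^ (m + 1) + ∑ p ∈ antidiagonal m, x ^ p.1 * (p.1.choose (p.2 + 1) : R) := by
    simp [weightedFibSum, Nat.sum_antidiagonal_succ']
  have pascal : weightedFibSum x (n + 2) = x ^ (n + 2) +
      ∑ p ∈ antidiagonal n, x ^ (p.1 + 1) * (p.1.choose p.2 + p.1.choose (p.2 + 1) : R) := by
    rw [weightedFibSum, Nat.sum_antidiagonal_succ, Nat.sum_antidiagonal_succ']
    simp [Nat.choose_succ_succ]
  rw [pascal, peel_succ, weightedFibSum]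
  simp only [mul_add, sum_add_distrib, mul_sum, pow_succ', mul_assoc]
  ring

theorem sum_filter_le_choose_eq_weightedFibSum (i : ℕ) :
    ∑ p ∈ (antidiagonal i).filter (fun p : ℕ × ℕ => p.1 ≤ p.2), x ^ p.2 * (p.2.choose p.1 : R) =
      weightedFibSum x i := by
  rw [sum_filter_of_ne fun p _ hp => not_lt.mp fun hlt => hp (by
    rw [Nat.choose_eq_zero_of_lt hlt, Nat.cast_zero, mul_zero])]
  exact Nat.sum_antidiagonal_swap.symm

end WeightedFibSum

theorem mem_Icc_of_add_two_eq_midpoint {K : Type*} [Field K] [LinearOrder K]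
    [IsStrictOrderedRing K] {u : ℕ → K} {a b : K}
    (h : ∀ n, u (n + 2) = (u (n + 1) + u n) / 2) (h0 : u 0 ∈ Set.Icc a b)
    (h1 : u 1 ∈ Set.Icc a b) (n : ℕ) : u n ∈ Set.Icc a b := by
  induction n using Nat.twoStepInduction with
  | zero => exact h0
  | one => exact h1
  | more n ihn ihn1 =>
    rw [h]
    constructor <;> linarith [ihn.1, ihn.2, ihn1.1, ihn1.2]

/-- For every `i ≥ 0`, the quantity
`c_i = ∑_{(m,n) : m+n=i, m ≤ n} 2^{-n} C(n,m)` satisfies `1/2 ≤ c_i ≤ 1`. -/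
theorem ci_between_half_and_one (i : ℕ) :
    1 / 2 ≤ ∑ p ∈ (Finset.HasAntidiagonal.antidiagonal i).filter (fun p : ℕ × ℕ => p.1 ≤ p.2),
        (1 / 2 : ℝ) ^ p.2 * (Nat.choose p.2 p.1 : ℝ) ∧
    ∑ p ∈ (Finset.HasAntidiagonal.antidiagonal i).filter (fun p : ℕ × ℕ => p.1 ≤ p.2),
        (1 / 2 : ℝ) ^ p.2 * (Nat.choose p.2 p.1 : ℝ) ≤ 1 := by
  rw [sum_filter_le_choose_eq_weightedFibSum]
  refine mem_Icc_of_add_two_eq_midpoint (fun n => ?_) ?_ ?_ i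
  · rw [weightedFibSum_add_two]
    ring
  · norm_num
  · norm_num
end

section
/- Let (V, μ) be a connected locally finite weighted graph with Green function g(x,y) = ∑_{n≥0} pₙ(x,y), and let ĝ be the Green function of the modified graph (V, μ̂) with μ̂_{xy} = (1/2)μ_{xy} + (1/2)∑_z μ_{xz}μ_{zy}/μ(z). Then (1/2)·g(x,y) ≤ ĝ(x,y) ≤ g(x,y) for all x, y ∈ V. -/
open scoped ENNReal

/-- Vertex weight `μ(x) = ∑_y μ_{xy}` of a weighted graph. -/
noncomputable def vertexWeight {V : Type*} (μ : V → V → ℝ≥0∞) (x : V) : ℝ≥0∞ := ∑' y, μ x y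

/-- Transition kernel `P(x,y) = μ_{xy}/μ(x)` of the random walk. -/
noncomputable def transKer {V : Type*} (μ : V → V → ℝ≥0∞) (x y : V) : ℝ≥0∞ :=
  μ x y / vertexWeight μ x

open Classical in
/-- Transition kernel of the walk killed on exiting `U`. -/
noncomputable def killedKer {V : Type*} (μ : V → V → ℝ≥0∞) (U : Set V) (x y : V) : ℝ≥0∞ :=
  if x ∈ U ∧ y ∈ U then transKer μ x y else 0

open Classical in
/-- `n`-step iterates `P^U_n` of the killed kernel, with `P^U_0 = I_U`. -/
noncomputable def killedKerN {V : Type*} (μ : V → V → ℝ≥0∞) (U : Set V) : ℕ → V → V → ℝ≥0∞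
  | 0 => fun x y => if x = y ∧ x ∈ U then 1 else 0
  | n + 1 => fun x y => ∑' z, killedKer μ U x z * killedKerN μ U n z y

/-- Killed Green function `g^U(x,y) = ∑_n P^U_n(x,y)/μ(y)`. -/
noncomputable def greenKilled {V : Type*} (μ : V → V → ℝ≥0∞) (U : Set V) (x y : V) : ℝ≥0∞ :=
  ∑' n, killedKerN μ U n x y / vertexWeight μ y

/-- Green function `g(x,y) = ∑_n pₙ(x,y)` of the graph. -/
noncomputable def green {V : Type*} (μ : V → V → ℝ≥0∞) (x y : V) : ℝ≥0∞ :=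
  greenKilled μ Set.univ x y

/-- Killed Green operator `G^U f(x) = ∑_{y∈U} g^U(x,y) f(y) μ(y)`. -/
noncomputable def greenOp {V : Type*} (μ : V → V → ℝ≥0∞) (U : Set V) (f : V → ℝ≥0∞) (x : V) :
    ℝ≥0∞ :=
  ∑' y, greenKilled μ U x y * f y * vertexWeight μ y

/-- The `L^q`-Green function `g_q(x,y) = ∑_z g(x,z) g(z,y)^{q-1} μ(z)`. -/
noncomputable def greenQ {V : Type*} (μ : V → V → ℝ≥0∞) (q : ℝ) (x y : V) : ℝ≥0∞ :=
  ∑' z, green μ x z * green μ z y ^ (q - 1) * vertexWeight μ z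

/-- The `μ`-weighted `L^q(U)` norm. -/
noncomputable def lqNorm {V : Type*} (μ : V → V → ℝ≥0∞) (U : Set V) (q : ℝ) (h : V → ℝ≥0∞) :
    ℝ≥0∞ :=
  (∑' x, U.indicator (fun x => h x ^ q * vertexWeight μ x) x) ^ (1 / q)

/-- The `L^p`-capacity `C_p(K,U)`:
`sup { ν(K)^p : ν = fμ, f ∈ ℓ⁺(K), ‖G^U f‖_{L^q(U)} ≤ 1 }`, `1/p + 1/q = 1`. -/
noncomputable def lpCap {V : Type*} (μ : V → V → ℝ≥0∞) (p q : ℝ) (K : Finset V) (U : Set V) :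
    ℝ≥0∞ :=
  ⨆ f ∈ {f : V → ℝ≥0∞ | (∀ x, x ∉ K → f x = 0) ∧ lqNorm μ U q (greenOp μ U f) ≤ 1},
    (∑ x ∈ K, f x * vertexWeight μ x) ^ p

/-- A weighted graph is locally finite if every vertex has finitely many neighbours. -/
def LocallyFinite' {V : Type*} (μ : V → V → ℝ≥0∞) : Prop :=
  ∀ x, (Function.support (μ x)).Finite

/-!
Write `P` for the transition kernel of `(V, μ)`. Since `μ̂(x) = μ(x)`, the transition kernel of
`(V, μ̂)` is `P̂ = P/2 + P²/2`, so `P̂ⁿ = ∑ₘ cₙ(m) Pᵐ`, where `cₙ` is the law after `n` steps of the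
walk on `ℕ` that moves by `1` or `2` with probability `1/2` each. Summing over `n`,
`ĝ = ∑ₘ aₘ Pᵐ / μ` with `aₘ = ∑ₙ cₙ(m)` the probability that this walk ever visits `m`. From
`a₀ = 1`, `a₁ = 1/2` and `aₘ₊₂ = (aₘ₊₁ + aₘ)/2` every `aₘ` lies in `[1/2, 1]`, whence
`g/2 ≤ ĝ ≤ g`.
-/

namespace OneTwoWalk

noncomputable def law : ℕ → ℕ → ℝ≥0∞
  | 0, 0 => 1
  | 0, _ + 1 => 0
  | _ + 1, 0 => 0
  | n + 1, 1 => law n 0 / 2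
  | n + 1, m + 2 => law n (m + 1) / 2 + law n m / 2

theorem tsum_law_succ_mul (n : ℕ) (f : ℕ → ℝ≥0∞) :
    ∑' m, law (n + 1) m * f m
      = (∑' m, law n m * f (m + 1)) / 2 + (∑' m, law n m * f (m + 2)) / 2 := by
  have split : ∀ m, law (n + 1) (m + 2) * f (m + 2)
      = law n (m + 1) * f (m + 2) * 2⁻¹ + law n m * f (m + 2) * 2⁻¹ := fun m => by
    simp only [law, div_eq_mul_inv]; ring
  rw [tsum_eq_zero_add' ENNReal.summable, tsum_eq_zero_add' ENNReal.summable,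
    tsum_eq_zero_add' ENNReal.summable (f := fun m => law n m * f (m + 1)),
    tsum_congr split, ENNReal.tsum_add, ENNReal.tsum_mul_right, ENNReal.tsum_mul_right]
  simp only [law, div_eq_mul_inv, zero_mul, zero_add]
  ring

noncomputable def visitProb (m : ℕ) : ℝ≥0∞ := ∑' n, law n m

theorem visitProb_zero : visitProb 0 = 1 := by
  rw [visitProb, tsum_eq_zero_add' ENNReal.summable]
  simp [law]

theorem visitProb_one : visitProb 1 = 2⁻¹ := by
  rw [visitProb, tsum_eq_zero_add' ENNReal.summable]
  simp only [law, div_eq_mul_inv, ENNReal.tsum_mul_right]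
  rw [← visitProb, visitProb_zero]
  simp

theorem visitProb_add_two (m : ℕ) : visitProb (m + 2) = visitProb (m + 1) / 2 + visitProb m / 2 := by
  rw [visitProb, tsum_eq_zero_add' ENNReal.summable]
  simp only [law, ENNReal.tsum_add, div_eq_mul_inv, ENNReal.tsum_mul_right]
  rw [← visitProb, ← visitProb]
  simp

theorem visitProb_mem_Icc (m : ℕ) : visitProb m ∈ Set.Icc 2⁻¹ 1 := by
  induction m using Nat.twoStepInduction with
  | zero => simp [visitProb_zero]
  | one => simp [visitProb_one]
  | more m ih₀ ih₁ =>
    rw [visitProb_add_two]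
    constructor
    · calc (2⁻¹ : ℝ≥0∞) = 2⁻¹ / 2 + 2⁻¹ / 2 := (ENNReal.add_halves _).symm
        _ ≤ visitProb (m + 1) / 2 + visitProb m / 2 := by gcongr; exacts [ih₁.1, ih₀.1]
    · calc visitProb (m + 1) / 2 + visitProb m / 2 ≤ 1 / 2 + 1 / 2 := by
            gcongr; exacts [ih₁.2, ih₀.2]
        _ = 1 := ENNReal.add_halves 1

end OneTwoWalk

section Kernel

variable {V : Type*}

open Classical in
noncomputable def kerPow (P : V → V → ℝ≥0∞) : ℕ → V → V → ℝ≥0∞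
  | 0 => fun x y => if x = y then 1 else 0
  | n + 1 => fun x y => ∑' z, P x z * kerPow P n z y

theorem kerPow_add_two (P : V → V → ℝ≥0∞) (m : ℕ) (x y : V) :
    kerPow P (m + 2) x y = ∑' z, (∑' w, P x w * P w z) * kerPow P m z y := by
  calc kerPow P (m + 2) x y
      = ∑' w, ∑' z, P x w * (P w z * kerPow P m z y) := by
        simp only [kerPow, ENNReal.tsum_mul_left]
    _ = ∑' z, ∑' w, P x w * (P w z * kerPow P m z y) := ENNReal.tsum_comm
    _ = ∑' z, (∑' w, P x w * P w z) * kerPow P m z y := by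
        simp only [← ENNReal.tsum_mul_right, mul_assoc]

variable {P Q : V → V → ℝ≥0∞} (hQ : ∀ x y, Q x y = P x y / 2 + (∑' z, P x z * P z y) / 2)
include hQ

theorem tsum_mul_kerPow_of_eq_half_add_sq (m : ℕ) (x y : V) :
    ∑' z, Q x z * kerPow P m z y = kerPow P (m + 1) x y / 2 + kerPow P (m + 2) x y / 2 := by
  rw [kerPow_add_two]
  simp only [hQ, kerPow, div_eq_mul_inv, add_mul, ENNReal.tsum_add, mul_right_comm _ (2⁻¹ : ℝ≥0∞),
    ENNReal.tsum_mul_right]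

theorem kerPow_eq_tsum_law_mul (n : ℕ) (x y : V) :
    kerPow Q n x y = ∑' m, OneTwoWalk.law n m * kerPow P m x y := by
  induction n generalizing x with
  | zero =>
    rw [tsum_eq_zero_add' ENNReal.summable]
    simp [OneTwoWalk.law, kerPow]
  | succ n ih =>
    calc kerPow Q (n + 1) x y
        = ∑' m, ∑' z, OneTwoWalk.law n m * (Q x z * kerPow P m z y) := by
          simp only [kerPow, ih, ← ENNReal.tsum_mul_left, mul_left_comm (Q x _)]
          exact ENNReal.tsum_comm
      _ = ∑' m, OneTwoWalk.law n m * (kerPow P (m + 1) x y / 2 + kerPow P (m + 2) x y / 2) := by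
          simp only [ENNReal.tsum_mul_left, tsum_mul_kerPow_of_eq_half_add_sq hQ]
      _ = ∑' m, OneTwoWalk.law (n + 1) m * kerPow P m x y := by
          simp only [OneTwoWalk.tsum_law_succ_mul, mul_add, ENNReal.tsum_add, div_eq_mul_inv,
            ← mul_assoc, ENNReal.tsum_mul_right]

theorem tsum_kerPow_eq_tsum_visitProb_mul (x y : V) :
    ∑' n, kerPow Q n x y = ∑' m, OneTwoWalk.visitProb m * kerPow P m x y := by
  simp only [kerPow_eq_tsum_law_mul hQ, OneTwoWalk.visitProb, ← ENNReal.tsum_mul_right]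
  exact ENNReal.tsum_comm

theorem tsum_kerPow_le_of_eq_half_add_sq (x y : V) :
    ∑' n, kerPow Q n x y ≤ ∑' n, kerPow P n x y := by
  rw [tsum_kerPow_eq_tsum_visitProb_mul hQ]
  exact ENNReal.tsum_le_tsum fun m => mul_le_of_le_one_left' (OneTwoWalk.visitProb_mem_Icc m).2

theorem half_tsum_kerPow_le_of_eq_half_add_sq (x y : V) :
    (∑' n, kerPow P n x y) / 2 ≤ ∑' n, kerPow Q n x y := by
  rw [tsum_kerPow_eq_tsum_visitProb_mul hQ, div_eq_mul_inv, ← ENNReal.tsum_mul_right]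
  exact ENNReal.tsum_le_tsum fun m => by
    rw [mul_comm]; exact mul_le_mul_left (OneTwoWalk.visitProb_mem_Icc m).1 _

end Kernel

section Graph

variable {V : Type*}

theorem killedKerN_univ (μ : V → V → ℝ≥0∞) (n : ℕ) :
    killedKerN μ Set.univ n = kerPow (transKer μ) n := by
  induction n with
  | zero => ext x y; by_cases h : x = y <;> simp [killedKerN, kerPow, h]
  | succ n ih => ext x y; simp [killedKerN, killedKer, kerPow, ih]

theorem green_eq_tsum_kerPow (μ : V → V → ℝ≥0∞) (x y : V) :
    green μ x y = (∑' n, kerPow (transKer μ) n x y) / vertexWeight μ y := by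
  simp only [green, greenKilled, killedKerN_univ, div_eq_mul_inv, ENNReal.tsum_mul_right]

variable {μ μh : V → V → ℝ≥0∞} (hpos : ∀ x, 0 < vertexWeight μ x)
  (hfin : ∀ x, vertexWeight μ x < ⊤)
  (hμh : ∀ x y, μh x y = μ x y / 2 + (∑' z, μ x z * μ z y / vertexWeight μ z) / 2)
include hpos hfin hμh

theorem vertexWeight_eq_of_modified (x : V) : vertexWeight μh x = vertexWeight μ x := by
  have two_steps : ∀ z, ∑' y, μ x z * μ z y / vertexWeight μ z = μ x z := fun z => by
    simp only [div_eq_mul_inv, ENNReal.tsum_mul_right, ENNReal.tsum_mul_left]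
    exact ENNReal.mul_div_cancel_right (hpos z).ne' (hfin z).ne
  calc vertexWeight μh x
      = vertexWeight μ x / 2 + (∑' z, ∑' y, μ x z * μ z y / vertexWeight μ z) / 2 := by
        rw [vertexWeight, tsum_congr (hμh x), ENNReal.tsum_add, ENNReal.tsum_comm]
        simp only [div_eq_mul_inv, ENNReal.tsum_mul_right]
        rfl
    _ = vertexWeight μ x := by rw [tsum_congr two_steps]; exact ENNReal.add_halves _

theorem transKer_eq_of_modified (x y : V) :
    transKer μh x y = transKer μ x y / 2 + (∑' z, transKer μ x z * transKer μ z y) / 2 := by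
  simp only [transKer, vertexWeight_eq_of_modified hpos hfin hμh, hμh, div_eq_mul_inv, add_mul,
    ← ENNReal.tsum_mul_right]
  congr 1
  · ring
  · exact tsum_congr fun z => by ring

end Graph

theorem green_modified_comparison_general {V : Type*}
    (μ : V → V → ℝ≥0∞)
    (hpos : ∀ x, 0 < vertexWeight μ x)
    (hfin : ∀ x, vertexWeight μ x < ⊤)
    (μh : V → V → ℝ≥0∞)
    (hμh : ∀ x y, μh x y = μ x y / 2 + (∑' z, μ x z * μ z y / vertexWeight μ z) / 2) :
    ∀ x y, green μ x y / 2 ≤ green μh x y ∧ green μh x y ≤ green μ x y := by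
  intro x y
  have hP := transKer_eq_of_modified hpos hfin hμh
  rw [green_eq_tsum_kerPow, green_eq_tsum_kerPow, vertexWeight_eq_of_modified hpos hfin hμh,
    ENNReal.div_right_comm]
  exact ⟨ENNReal.div_le_div_right (half_tsum_kerPow_le_of_eq_half_add_sq hP x y) _,
    ENNReal.div_le_div_right (tsum_kerPow_le_of_eq_half_add_sq hP x y) _⟩

/-- comparison of the Green functions of `(V,μ)` and of the modified graph
`(V,μ̂)` with `μ̂_{xy} = (1/2)μ_{xy} + (1/2)∑_z μ_{xz}μ_{zy}/μ(z)`: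
`(1/2) g(x,y) ≤ ĝ(x,y) ≤ g(x,y)`. -/
theorem green_modified_comparison {V : Type*}
    (μ : V → V → ℝ≥0∞)
    (hsym : ∀ x y, μ x y = μ y x)
    (hloc : LocallyFinite' μ)
    (hpos : ∀ x, 0 < vertexWeight μ x)
    (hfin : ∀ x, vertexWeight μ x < ⊤)
    (hconn : ∀ x y : V, ∃ n, 0 < killedKerN μ Set.univ n x y)
    (μh : V → V → ℝ≥0∞)
    (hμh : ∀ x y, μh x y = μ x y / 2 + (∑' z, μ x z * μ z y / vertexWeight μ z) / 2) :
    ∀ x y, green μ x y / 2 ≤ green μh x y ∧ green μh x y ≤ green μ x y :=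
  green_modified_comparison_general μ hpos hfin μh hμh
end

section
/- Let (V, μ) be a connected locally finite weighted graph whose Green function g(x,y) is finite. If g_q(x₀, y₀) < ∞ for one pair (x₀, y₀) ∈ V × V, then g_q(x, y) < ∞ for all pairs (x, y) ∈ V × V, where g_q(x,y) = ∑_{z ∈ V} g(x,z) g(z,y)^{q−1} μ(z) and q > 1. -/
open scoped ENNReal

/-!
Chapman–Kolmogorov gives `Pₙ(x₀,x) g(x,z) ≤ g(x₀,z)` and
`g(z,y) μ(y) Pₘ(y,y₀) ≤ g(z,y₀) μ(y₀)` for all `z`. Choosing `n`, `m` with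
`Pₙ(x₀,x) > 0` and `Pₘ(y,y₀) > 0` by connectedness, every summand of `g_q(x,y)` is bounded
by a fixed finite multiple of the corresponding summand of `g_q(x₀,y₀)`.
-/

section KilledWalk

variable {V : Type*} (μ : V → V → ℝ≥0∞) (U : Set V)

lemma killedKerN_succ (n : ℕ) (x y : V) :
    killedKerN μ U (n + 1) x y = ∑' z, killedKer μ U x z * killedKerN μ U n z y :=
  rfl

lemma killedKerN_eq_zero_of_notMem {x : V} (hx : x ∉ U) (n : ℕ) (y : V) :
    killedKerN μ U n x y = 0 := by
  cases n with
  | zero => simp [killedKerN, hx]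
  | succ n => simp [killedKerN_succ, killedKer, hx]

lemma killedKerN_add (n m : ℕ) (x y : V) :
    killedKerN μ U (n + m) x y = ∑' z, killedKerN μ U n x z * killedKerN μ U m z y := by
  induction n generalizing x with
  | zero =>
    by_cases hx : x ∈ U
    · rw [zero_add, tsum_eq_single x fun z hz => by simp [killedKerN, Ne.symm hz]]
      simp [killedKerN, hx]
    · simp [killedKerN_eq_zero_of_notMem μ U hx]
  | succ n ih =>
    calc killedKerN μ U (n + 1 + m) x y
        = ∑' z, ∑' w, killedKer μ U x z * (killedKerN μ U n z w * killedKerN μ U m w y) := by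
          rw [Nat.add_right_comm, killedKerN_succ]
          simp_rw [ih, ENNReal.tsum_mul_left]
      _ = ∑' w, (∑' z, killedKer μ U x z * killedKerN μ U n z w) * killedKerN μ U m w y := by
          rw [ENNReal.tsum_comm]
          simp_rw [← ENNReal.tsum_mul_right, mul_assoc]

lemma killedKerN_mul_greenKilled_le (n : ℕ) (x w y : V) :
    killedKerN μ U n x w * greenKilled μ U w y ≤ greenKilled μ U x y := by
  unfold greenKilled
  rw [← ENNReal.tsum_mul_left]
  calc ∑' m, killedKerN μ U n x w * (killedKerN μ U m w y / vertexWeight μ y)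
      ≤ ∑' m, killedKerN μ U (n + m) x y / vertexWeight μ y := by
        gcongr with m
        rw [← mul_div_assoc, killedKerN_add]
        gcongr
        exact ENNReal.le_tsum w
    _ ≤ ∑' k, killedKerN μ U k x y / vertexWeight μ y :=
        ENNReal.tsum_comp_le_tsum_of_injective (add_right_injective n) _

lemma greenKilled_mul_killedKerN_le {w : V} (hw₀ : vertexWeight μ w ≠ 0)
    (hw : vertexWeight μ w ≠ ⊤) (m : ℕ) (x y : V) :
    greenKilled μ U x y * (vertexWeight μ y * killedKerN μ U m y w)
      ≤ greenKilled μ U x w * vertexWeight μ w := by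
  unfold greenKilled
  rw [← ENNReal.tsum_mul_right, ← ENNReal.tsum_mul_right]
  calc ∑' n, killedKerN μ U n x y / vertexWeight μ y * (vertexWeight μ y * killedKerN μ U m y w)
      ≤ ∑' n, killedKerN μ U (n + m) x w := by
        gcongr with n
        calc _ = killedKerN μ U n x y / vertexWeight μ y * vertexWeight μ y
              * killedKerN μ U m y w := (mul_assoc _ _ _).symm
          _ ≤ killedKerN μ U n x y * killedKerN μ U m y w := by
              gcongr
              -- `a / b * b ≤ a` in `ℝ≥0∞` even for `b = 0` or `b = ∞`
              exact ENNReal.mul_le_of_le_div le_rfl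
          _ ≤ killedKerN μ U (n + m) x w := by
              rw [killedKerN_add]
              exact ENNReal.le_tsum y
    _ = ∑' n, killedKerN μ U (n + m) x w / vertexWeight μ w * vertexWeight μ w := by
        simp_rw [ENNReal.div_mul_cancel hw₀ hw]
    _ ≤ ∑' k, killedKerN μ U k x w / vertexWeight μ w * vertexWeight μ w :=
        ENNReal.tsum_comp_le_tsum_of_injective (add_left_injective m) _

end KilledWalk

lemma greenQ_le_of_green_le {V : Type*} (μ : V → V → ℝ≥0∞) {q : ℝ} (hq : 1 ≤ q)
    {x₀ y₀ x y : V} {a b c : ℝ≥0∞} (hx : ∀ z, a * green μ x z ≤ green μ x₀ z)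
    (hy : ∀ z, green μ z y * b ≤ green μ z y₀ * c) :
    a * b ^ (q - 1) * greenQ μ q x y ≤ c ^ (q - 1) * greenQ μ q x₀ y₀ := by
  have hq₁ : 0 ≤ q - 1 := sub_nonneg.mpr hq
  unfold greenQ
  rw [← ENNReal.tsum_mul_left, ← ENNReal.tsum_mul_left]
  refine ENNReal.tsum_le_tsum fun z => ?_
  calc a * b ^ (q - 1) * (green μ x z * green μ z y ^ (q - 1) * vertexWeight μ z)
      = a * green μ x z * (green μ z y * b) ^ (q - 1) * vertexWeight μ z := by
        rw [ENNReal.mul_rpow_of_nonneg _ _ hq₁]; ring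
    _ ≤ green μ x₀ z * (green μ z y₀ * c) ^ (q - 1) * vertexWeight μ z := by
        gcongr ?_ * ?_ ^ _ * _
        exacts [hx z, hy z]
    _ = c ^ (q - 1) * (green μ x₀ z * green μ z y₀ ^ (q - 1) * vertexWeight μ z) := by
        rw [ENNReal.mul_rpow_of_nonneg _ _ hq₁]; ring

theorem greenQ_finite_everywhere_general {V : Type*}
    (μ : V → V → ℝ≥0∞)
    (hpos : ∀ x, 0 < vertexWeight μ x)
    (hfin : ∀ x, vertexWeight μ x < ⊤)
    (hconn : ∀ x y : V, ∃ n, 0 < killedKerN μ Set.univ n x y)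
    (q : ℝ) (hq : 1 < q)
    (x₀ y₀ : V) (h : greenQ μ q x₀ y₀ < ⊤) :
    ∀ x y, greenQ μ q x y < ⊤ := by
  intro x y
  have hq₁ : 0 ≤ q - 1 := by linarith
  obtain ⟨n, hn⟩ := hconn x₀ x
  obtain ⟨m, hm⟩ := hconn y y₀
  have hbound := greenQ_le_of_green_le μ hq.le
    (fun z => killedKerN_mul_greenKilled_le μ Set.univ n x₀ x z)
    (fun z => greenKilled_mul_killedKerN_le μ Set.univ (hpos y₀).ne' (hfin y₀).ne m z y)
  have hconst : killedKerN μ Set.univ n x₀ x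
      * (vertexWeight μ y * killedKerN μ Set.univ m y y₀) ^ (q - 1) ≠ 0 := by
    have hb := ENNReal.mul_pos (hpos y).ne' hm.ne'
    exact mul_ne_zero hn.ne' (ENNReal.rpow_pos_of_nonneg hb hq₁).ne'
  have hfinite : vertexWeight μ y₀ ^ (q - 1) * greenQ μ q x₀ y₀ ≠ ⊤ :=
    ENNReal.mul_ne_top (ENNReal.rpow_ne_top_of_nonneg hq₁ (hfin y₀).ne) h.ne
  exact ENNReal.lt_top_of_mul_ne_top_right (ne_top_of_le_ne_top hfinite hbound) hconst

/-- if the Green function is finite and `g_q(x₀,y₀) < ∞` for one pair,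
then `g_q(x,y) < ∞` for all pairs. Connectedness is expressed by the positivity of
some `n`-step transition probability between any two vertices. -/
theorem greenQ_finite_everywhere {V : Type*}
    (μ : V → V → ℝ≥0∞)
    (hsym : ∀ x y, μ x y = μ y x)
    (hloc : LocallyFinite' μ)
    (hpos : ∀ x, 0 < vertexWeight μ x)
    (hfin : ∀ x, vertexWeight μ x < ⊤)
    (hconn : ∀ x y : V, ∃ n, 0 < killedKerN μ Set.univ n x y)
    (hgfin : ∀ x y, green μ x y < ⊤)
    (q : ℝ) (hq : 1 < q)
    (x₀ y₀ : V) (h : greenQ μ q x₀ y₀ < ⊤) :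
    ∀ x y, greenQ μ q x y < ⊤ :=
  greenQ_finite_everywhere_general μ hpos hfin hconn q hq x₀ y₀ h
end

section
/- Let {Uₙ} be an increasing exhaustion of U by subsets and K a finite subset of U (with g^U finite). Then for 1 < p < ∞, C_p(K, Uₙ) is decreasing in n and lim_{n→∞} C_p(K, Uₙ) = C_p(K, U). -/
open scoped ENNReal

/-- The `L^p`-capacity in its equivalent infimum form
`C_p(K,W) = inf{‖f‖_{L^p(W)}^p : f ∈ L_+^p(W), G^W f ≥ 1 on K}`. -/
noncomputable def capInf {V : Type*} (μ : V → V → ℝ≥0∞) (p : ℝ) (K : Finset V) (W : Set V) :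
    ℝ≥0∞ :=
  ⨅ f ∈ {f : V → ℝ≥0∞ | (∀ x, x ∉ W → f x = 0) ∧ ∀ x ∈ K, 1 ≤ greenOp μ W f x},
    ∑' x, W.indicator (fun x => f x ^ p * vertexWeight μ x) x

/-!
Killing the walk outside a smaller set can only decrease the killed kernel, hence its iterates, the
Green function and the Green operator; so a potential admissible for `W ⊆ W'` stays admissible for
`W'`, and `C_p(K, ·)` is antitone. Conversely, by monotone convergence `g^{Uₙ} ↑ g^U`, so for an
admissible `f` on `U` and `s < 1` some `Uₙ` already has `G^{Uₙ} f > s` on the finite set `K`; then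
`s⁻¹ 1_{Uₙ} f` is admissible for `Uₙ` with energy at most `s^{-p}` times that of `f`, and letting
`s → 1` gives `inf_n C_p(K, Uₙ) ≤ C_p(K, U)`.
-/

theorem ENNReal.tsum_iSup_of_monotone {ι α : Type*} [Preorder ι] [IsDirectedOrder ι]
    {f : ι → α → ℝ≥0∞} (hf : ∀ a, Monotone fun i => f i a) :
    ∑' a, ⨆ i, f i a = ⨆ i, ∑' a, f i a := by
  refine le_antisymm ?_ (iSup_le fun i => ENNReal.tsum_le_tsum fun a => le_iSup (f · a) i)
  rw [ENNReal.tsum_eq_iSup_sum]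
  refine iSup_le fun s => ?_
  rw [ENNReal.finsetSum_iSup_of_monotone hf]
  exact iSup_mono fun i => ENNReal.sum_le_tsum s

theorem ENNReal.iSup_mul_iSup_of_monotone {ι : Type*} [Preorder ι] [IsDirectedOrder ι]
    {f g : ι → ℝ≥0∞} (hf : Monotone f) (hg : Monotone g) :
    (⨆ i, f i) * (⨆ i, g i) = ⨆ i, f i * g i := by
  refine le_antisymm ?_ (iSup_le fun i => mul_le_mul' (le_iSup f i) (le_iSup g i))
  rw [ENNReal.iSup_mul]
  refine iSup_le fun i => ?_
  rw [ENNReal.mul_iSup]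
  refine iSup_le fun j => ?_
  obtain ⟨k, hik, hjk⟩ := exists_ge_ge i j
  exact le_iSup_of_le k (mul_le_mul' (hf hik) (hg hjk))

section KilledWalk

variable {V : Type*} {μ : V → V → ℝ≥0∞} {W W' : Set V}

theorem killedKer_mono (h : W ⊆ W') (x y : V) : killedKer μ W x y ≤ killedKer μ W' x y := by
  unfold killedKer
  split_ifs with hW hW'
  · exact le_rfl
  · exact absurd ⟨h hW.1, h hW.2⟩ hW'
  · exact zero_le
  · exact le_rfl

theorem killedKerN_mono (h : W ⊆ W') (m : ℕ) (x y : V) :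
    killedKerN μ W m x y ≤ killedKerN μ W' m x y := by
  induction m generalizing x y with
  | zero =>
    simp only [killedKerN]
    split_ifs with hW hW'
    · exact le_rfl
    · exact absurd ⟨hW.1, h hW.2⟩ hW'
    · exact zero_le
    · exact le_rfl
  | succ m ih =>
    exact ENNReal.tsum_le_tsum fun z => mul_le_mul' (killedKer_mono h x z) (ih z y)

theorem killedKerN_of_notMem {y : V} (hy : y ∉ W) (m : ℕ) (x : V) :
    killedKerN μ W m x y = 0 := by
  induction m generalizing x with
  | zero =>
    simp only [killedKerN]
    exact if_neg fun ⟨hxy, hx⟩ => hy (hxy ▸ hx)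
  | succ m ih => simp [killedKerN, ih]

theorem greenKilled_mono (h : W ⊆ W') (x y : V) : greenKilled μ W x y ≤ greenKilled μ W' x y :=
  ENNReal.tsum_le_tsum fun m => ENNReal.div_le_div_right (killedKerN_mono h m x y) _

theorem greenKilled_of_notMem {y : V} (hy : y ∉ W) (x : V) : greenKilled μ W x y = 0 := by
  simp [greenKilled, killedKerN_of_notMem hy]

theorem greenOp_mono (h : W ⊆ W') (f : V → ℝ≥0∞) (x : V) :
    greenOp μ W f x ≤ greenOp μ W' f x :=
  ENNReal.tsum_le_tsum fun y => by gcongr; exact greenKilled_mono h x y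

theorem greenOp_const_mul (W : Set V) (c : ℝ≥0∞) (f : V → ℝ≥0∞) (x : V) :
    greenOp μ W (fun y => c * f y) x = c * greenOp μ W f x := by
  rw [greenOp, greenOp, ← ENNReal.tsum_mul_left]
  exact tsum_congr fun y => by ring

theorem greenOp_indicator (W : Set V) (f : V → ℝ≥0∞) (x : V) :
    greenOp μ W (W.indicator f) x = greenOp μ W f x := by
  refine tsum_congr fun y => ?_
  by_cases hy : y ∈ W
  · rw [Set.indicator_of_mem hy]
  · simp [greenKilled_of_notMem hy]

end KilledWalk

section Exhaustion

variable {V : Type*} {μ : V → V → ℝ≥0∞} {U : Set V} {Un : ℕ → Set V}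

theorem killedKer_iSup (hmono : Monotone Un) (hexh : ⋃ n, Un n = U) (x y : V) :
    ⨆ n, killedKer μ (Un n) x y = killedKer μ U x y := by
  refine le_antisymm (iSup_le fun n => killedKer_mono (hexh ▸ Set.subset_iUnion Un n) x y) ?_
  unfold killedKer
  split_ifs with hxy
  · obtain ⟨i, hi⟩ := Set.mem_iUnion.1 (hexh ▸ hxy.1)
    obtain ⟨j, hj⟩ := Set.mem_iUnion.1 (hexh ▸ hxy.2)
    refine le_iSup_of_le (max i j) ?_
    rw [if_pos ⟨hmono (le_max_left i j) hi, hmono (le_max_right i j) hj⟩]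
  · exact zero_le

theorem killedKerN_iSup (hmono : Monotone Un) (hexh : ⋃ n, Un n = U) (m : ℕ) (x y : V) :
    ⨆ n, killedKerN μ (Un n) m x y = killedKerN μ U m x y := by
  induction m generalizing x y with
  | zero =>
    refine le_antisymm
      (iSup_le fun n => killedKerN_mono (hexh ▸ Set.subset_iUnion Un n) 0 x y) ?_
    simp only [killedKerN]
    split_ifs with hxy
    · obtain ⟨i, hi⟩ := Set.mem_iUnion.1 (hexh ▸ hxy.2)
      refine le_iSup_of_le i ?_
      rw [if_pos ⟨hxy.1, hi⟩]
    · exact zero_le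
  | succ m ih =>
    have hker (z : V) : Monotone fun n => killedKer μ (Un n) x z :=
      fun _ _ hab => killedKer_mono (hmono hab) x z
    have hkerN (z : V) : Monotone fun n => killedKerN μ (Un n) m z y :=
      fun _ _ hab => killedKerN_mono (hmono hab) m z y
    calc ⨆ n, killedKerN μ (Un n) (m + 1) x y
        = ∑' z, ⨆ n, killedKer μ (Un n) x z * killedKerN μ (Un n) m z y :=
          (ENNReal.tsum_iSup_of_monotone fun z _ _ hab =>
            mul_le_mul' (hker z hab) (hkerN z hab)).symm
      _ = ∑' z, killedKer μ U x z * killedKerN μ U m z y := by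
          refine tsum_congr fun z => ?_
          rw [← killedKer_iSup hmono hexh x z, ← ih z y,
            ENNReal.iSup_mul_iSup_of_monotone (hker z) (hkerN z)]

theorem greenKilled_iSup (hmono : Monotone Un) (hexh : ⋃ n, Un n = U) (x y : V) :
    ⨆ n, greenKilled μ (Un n) x y = greenKilled μ U x y := by
  unfold greenKilled
  rw [← ENNReal.tsum_iSup_of_monotone fun m _ _ hab =>
    ENNReal.div_le_div_right (killedKerN_mono (hmono hab) m x y) _]
  refine tsum_congr fun m => ?_
  rw [← killedKerN_iSup hmono hexh m x y, ENNReal.iSup_div]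

theorem greenOp_iSup (hmono : Monotone Un) (hexh : ⋃ n, Un n = U) (f : V → ℝ≥0∞) (x : V) :
    ⨆ n, greenOp μ (Un n) f x = greenOp μ U f x := by
  unfold greenOp
  rw [← ENNReal.tsum_iSup_of_monotone
    (f := fun n y => greenKilled μ (Un n) x y * f y * vertexWeight μ y) fun y _ _ hab =>
    mul_le_mul' (mul_le_mul' (greenKilled_mono (hmono hab) x y) le_rfl) le_rfl]
  refine tsum_congr fun y => ?_
  rw [← greenKilled_iSup hmono hexh x y, ENNReal.iSup_mul, ENNReal.iSup_mul]

theorem exists_forall_lt_greenOp (hmono : Monotone Un) (hexh : ⋃ n, Un n = U) {K : Finset V}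
    {f : V → ℝ≥0∞} {s : ℝ≥0∞} (hs : ∀ x ∈ K, s < greenOp μ U f x) :
    ∃ N, ∀ x ∈ K, s < greenOp μ (Un N) f x := by
  have hev (x : V) (hx : x ∈ K) : ∀ᶠ n in Filter.atTop, s < greenOp μ (Un n) f x := by
    have hlim := tendsto_atTop_iSup fun _ _ hab => greenOp_mono (μ := μ) (hmono hab) f x
    rw [greenOp_iSup hmono hexh] at hlim
    exact hlim.eventually (lt_mem_nhds (hs x hx))
  exact ((Filter.eventually_all_finset K).2 hev).exists

end Exhaustion

section Capacity

variable {V : Type*} {μ : V → V → ℝ≥0∞} {p : ℝ} {K : Finset V} {W W' : Set V}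

theorem indicator_rpow_mul_eq_self (hp : 0 < p) {f : V → ℝ≥0∞} (hf : ∀ x ∉ W, f x = 0)
    (g : V → ℝ≥0∞) : W.indicator (fun x => f x ^ p * g x) = fun x => f x ^ p * g x :=
  Set.indicator_eq_self.2 fun x hx => by_contra fun hxW => hx (by simp [hf x hxW, hp])

theorem capInf_anti (hp : 0 < p) (K : Finset V) (h : W ⊆ W') :
    capInf μ p K W' ≤ capInf μ p K W := by
  refine le_iInf₂ fun f ⟨hf0, hfK⟩ => ?_
  have hf0' : ∀ x ∉ W', f x = 0 := fun x hx => hf0 x fun hxW => hx (h hxW)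
  refine (iInf₂_le f ⟨hf0', fun x hx => (hfK x hx).trans (greenOp_mono h f x)⟩).trans_eq ?_
  rw [indicator_rpow_mul_eq_self hp hf0, indicator_rpow_mul_eq_self hp hf0']

theorem rpow_mul_capInf_le (hp : 0 ≤ p) {f : V → ℝ≥0∞} {s : ℝ≥0∞} (hs0 : s ≠ 0) (hs : s ≠ ⊤)
    (hfK : ∀ x ∈ K, s ≤ greenOp μ W f x) :
    s ^ p * capInf μ p K W ≤ ∑' x, W.indicator (fun x => f x ^ p * vertexWeight μ x) x := by
  set g := W.indicator fun y => s⁻¹ * f y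
  have hg : g ∈ {g : V → ℝ≥0∞ | (∀ x, x ∉ W → g x = 0) ∧ ∀ x ∈ K, 1 ≤ greenOp μ W g x} := by
    refine ⟨fun x hx => Set.indicator_of_notMem hx _, fun x hx => ?_⟩
    rw [greenOp_indicator, greenOp_const_mul, ← ENNReal.inv_mul_cancel hs0 hs]
    exact mul_le_mul' le_rfl (hfK x hx)
  have hcost : ∑' x, W.indicator (fun x => g x ^ p * vertexWeight μ x) x
      = s⁻¹ ^ p * ∑' x, W.indicator (fun x => f x ^ p * vertexWeight μ x) x := by
    rw [← ENNReal.tsum_mul_left]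
    refine tsum_congr fun x => ?_
    by_cases hx : x ∈ W
    · simp [g, hx, ENNReal.mul_rpow_of_nonneg _ _ hp, mul_assoc]
    · simp [hx]
  calc s ^ p * capInf μ p K W
      ≤ s ^ p * (s⁻¹ ^ p * ∑' x, W.indicator (fun x => f x ^ p * vertexWeight μ x) x) :=
        mul_le_mul' le_rfl (hcost ▸ iInf₂_le g hg)
    _ = ∑' x, W.indicator (fun x => f x ^ p * vertexWeight μ x) x := by
        rw [← mul_assoc, ← ENNReal.mul_rpow_of_nonneg _ _ hp, ENNReal.mul_inv_cancel hs0 hs,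
          ENNReal.one_rpow, one_mul]

theorem iInf_capInf_le_of_exhaustion (hp : 0 < p) {U : Set V} {Un : ℕ → Set V}
    (hmono : Monotone Un) (hexh : ⋃ n, Un n = U) :
    ⨅ n, capInf μ p K (Un n) ≤ capInf μ p K U := by
  refine le_iInf₂ fun f ⟨_, hfK⟩ => ENNReal.le_of_forall_lt_one_mul_le fun t ht => ?_
  rcases eq_or_ne t 0 with rfl | ht0
  · simp
  have hs1 : t ^ p⁻¹ < 1 := ENNReal.rpow_lt_one ht (inv_pos.2 hp)
  obtain ⟨N, hN⟩ := exists_forall_lt_greenOp hmono hexh fun x hx => hs1.trans_le (hfK x hx)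
  calc t * ⨅ n, capInf μ p K (Un n)
      = (t ^ p⁻¹) ^ p * ⨅ n, capInf μ p K (Un n) := by rw [ENNReal.rpow_inv_rpow hp.ne']
    _ ≤ (t ^ p⁻¹) ^ p * capInf μ p K (Un N) := mul_le_mul' le_rfl (iInf_le _ N)
    _ ≤ ∑' x, (Un N).indicator (fun x => f x ^ p * vertexWeight μ x) x :=
        rpow_mul_capInf_le hp.le (ENNReal.rpow_pos (pos_iff_ne_zero.2 ht0) ht.ne_top).ne'
          hs1.ne_top fun x hx => (hN x hx).le
    _ ≤ ∑' x, U.indicator (fun x => f x ^ p * vertexWeight μ x) x :=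
        ENNReal.tsum_le_tsum <| Set.indicator_le_indicator_of_subset
          (hexh ▸ Set.subset_iUnion Un N) fun _ => zero_le

end Capacity

theorem capInf_exhaustion_limit_general {V : Type*}
    (μ : V → V → ℝ≥0∞)
    (U : Set V)
    (Un : ℕ → Set V) (hmono : Monotone Un) (hexh : (⋃ n, Un n) = U)
    (K : Finset V)
    (p : ℝ) (hp : 1 < p) :
    Antitone (fun n => capInf μ p K (Un n)) ∧
    Filter.Tendsto (fun n => capInf μ p K (Un n)) Filter.atTop (nhds (capInf μ p K U)) := by
  have hp0 : 0 < p := zero_lt_one.trans hp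
  have hanti : Antitone fun n => capInf μ p K (Un n) :=
    fun _ _ hab => capInf_anti hp0 K (hmono hab)
  have hinf : ⨅ n, capInf μ p K (Un n) = capInf μ p K U :=
    le_antisymm (iInf_capInf_le_of_exhaustion hp0 hmono hexh)
      (le_iInf fun n => capInf_anti hp0 K (hexh ▸ Set.subset_iUnion Un n))
  exact ⟨hanti, hinf ▸ tendsto_atTop_iInf hanti⟩

/-- for an increasing exhaustion `Uₙ` of `U` and a finite `K ⊆ U`,
`C_p(K,Uₙ)` is decreasing in `n` and tends to `C_p(K,U)`. -/
theorem capInf_exhaustion_limit {V : Type*}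
    (μ : V → V → ℝ≥0∞)
    (hsym : ∀ x y, μ x y = μ y x)
    (hloc : LocallyFinite' μ)
    (hpos : ∀ x, 0 < vertexWeight μ x)
    (hfin : ∀ x, vertexWeight μ x < ⊤)
    (U : Set V)
    (hgU : ∀ x y, greenKilled μ U x y < ⊤)
    (Un : ℕ → Set V) (hmono : Monotone Un) (hexh : (⋃ n, Un n) = U)
    (K : Finset V) (hK : ↑K ⊆ U)
    (p : ℝ) (hp : 1 < p) :
    Antitone (fun n => capInf μ p K (Un n)) ∧
    Filter.Tendsto (fun n => capInf μ p K (Un n)) Filter.atTop (nhds (capInf μ p K U)) :=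
  capInf_exhaustion_limit_general μ U Un hmono hexh K p hp
end

section
/- For a connected locally finite weighted graph (V, μ) and 1 < p < ∞ with conjugate exponent q, the graph is L^p-parabolic if and only if g_q(x, y) = ∞ for some (equivalently, all) x, y ∈ V. -/
open scoped ENNReal

/- Testing the capacity of `{x}` against multiples of `δ_x` shows that all capacities
vanish iff `‖g(x,·)‖_q = ∞` for every `x`. Connectedness gives the Harnack-type bound
`P_n(x,y) g(y,·) ≤ g(x,·)` with `P_n(x,y) > 0`, so this is independent of `x`; by symmetry of `g`
and `g · g^{q-1} = g^q`, it also makes `g_q(x,y)` comparable to `g_q(y,y) = ‖g(y,·)‖_q^q`. -/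

namespace killedKerN

variable {V : Type*} (μ : V → V → ℝ≥0∞) (U : Set V)

open Classical in
theorem zero_apply (x y : V) : killedKerN μ U 0 x y = if x = y ∧ x ∈ U then 1 else 0 := rfl

theorem succ_apply (n : ℕ) (x y : V) :
    killedKerN μ U (n + 1) x y = ∑' z, killedKer μ U x z * killedKerN μ U n z y := rfl

theorem eq_zero_of_notMem {x : V} (hx : x ∉ U) (n : ℕ) (y : V) : killedKerN μ U n x y = 0 := by
  cases n <;> simp [zero_apply, succ_apply, killedKer, hx]

theorem add_apply (n m : ℕ) (x y : V) :
    killedKerN μ U (n + m) x y = ∑' z, killedKerN μ U n x z * killedKerN μ U m z y := by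
  induction n generalizing x with
  | zero =>
    rw [Nat.zero_add, tsum_eq_single x fun z hz => by simp [zero_apply, Ne.symm hz]]
    by_cases hx : x ∈ U <;> simp [zero_apply, hx, eq_zero_of_notMem]
  | succ n ih =>
    calc killedKerN μ U (n + 1 + m) x y
        = ∑' z, ∑' w, killedKer μ U x z * (killedKerN μ U n z w * killedKerN μ U m w y) := by
          simp only [Nat.add_right_comm n 1 m, succ_apply, ih, ENNReal.tsum_mul_left]
      _ = ∑' w, (∑' z, killedKer μ U x z * killedKerN μ U n z w) * killedKerN μ U m w y := by
          rw [ENNReal.tsum_comm]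
          simp only [← mul_assoc, ENNReal.tsum_mul_right]

theorem succ_apply' (n : ℕ) (x y : V) :
    killedKerN μ U (n + 1) x y = ∑' z, killedKerN μ U n x z * killedKer μ U z y := by
  rw [add_apply]
  refine tsum_congr fun z => congrArg _ ?_
  rw [succ_apply, tsum_eq_single y fun w hw => by simp [zero_apply, hw]]
  by_cases hy : y ∈ U <;> simp [zero_apply, killedKer, hy]

variable {μ}

theorem vertexWeight_mul_comm (hsym : ∀ x y, μ x y = μ y x)
    (hpos : ∀ x, 0 < vertexWeight μ x) (hfin : ∀ x, vertexWeight μ x < ⊤) (n : ℕ) (x y : V) :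
    vertexWeight μ x * killedKerN μ U n x y = vertexWeight μ y * killedKerN μ U n y x := by
  have hker :
      ∀ a b, vertexWeight μ a * killedKer μ U a b = vertexWeight μ b * killedKer μ U b a := by
    intro a b
    simp only [killedKer, transKer]
    by_cases hab : a ∈ U ∧ b ∈ U
    · rw [if_pos hab, if_pos hab.symm, ENNReal.mul_div_cancel (hpos a).ne' (hfin a).ne,
        ENNReal.mul_div_cancel (hpos b).ne' (hfin b).ne, hsym]
    · rw [if_neg hab, if_neg (mt And.symm hab), mul_zero, mul_zero]
  induction n generalizing x y with
  | zero =>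
    rcases eq_or_ne x y with rfl | hxy
    · rfl
    · simp [zero_apply, hxy, Ne.symm hxy]
  | succ n ih =>
    calc vertexWeight μ x * killedKerN μ U (n + 1) x y
        = ∑' z, vertexWeight μ y * killedKerN μ U n y z * killedKer μ U z x := by
          rw [succ_apply, ← ENNReal.tsum_mul_left]
          refine tsum_congr fun z => ?_
          rw [← mul_assoc, hker, mul_right_comm, ih]
      _ = vertexWeight μ y * killedKerN μ U (n + 1) y x := by
          simp only [succ_apply', mul_assoc, ENNReal.tsum_mul_left]

end killedKerN

section Green

variable {V : Type*} {μ : V → V → ℝ≥0∞}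

theorem greenKilled_comm (U : Set V) (hsym : ∀ x y, μ x y = μ y x)
    (hpos : ∀ x, 0 < vertexWeight μ x) (hfin : ∀ x, vertexWeight μ x < ⊤) (x y : V) :
    greenKilled μ U x y = greenKilled μ U y x := by
  refine tsum_congr fun n => ?_
  rw [← ENNReal.mul_div_mul_left _ _ (hpos x).ne' (hfin x).ne,
    killedKerN.vertexWeight_mul_comm U hsym hpos hfin, mul_comm (vertexWeight μ x),
    ENNReal.mul_div_mul_left _ _ (hpos y).ne' (hfin y).ne]

theorem green_comm (hsym : ∀ x y, μ x y = μ y x)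
    (hpos : ∀ x, 0 < vertexWeight μ x) (hfin : ∀ x, vertexWeight μ x < ⊤) (x y : V) :
    green μ x y = green μ y x :=
  greenKilled_comm _ hsym hpos hfin x y

theorem killedKerN_mul_green_le (n : ℕ) (x y z : V) :
    killedKerN μ Set.univ n x y * green μ y z ≤ green μ x z :=
  calc killedKerN μ Set.univ n x y * green μ y z
      = ∑' m, killedKerN μ Set.univ n x y * killedKerN μ Set.univ m y z / vertexWeight μ z := by
        simp only [green, greenKilled, mul_div_assoc, ENNReal.tsum_mul_left]
    _ ≤ ∑' m, killedKerN μ Set.univ (n + m) x z / vertexWeight μ z := by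
        gcongr with m
        rw [killedKerN.add_apply]
        exact ENNReal.le_tsum y
    _ ≤ green μ x z := ENNReal.tsum_comp_le_tsum_of_injective (add_right_injective n) _

end Green

section LqNorm

variable {V : Type*} {μ : V → V → ℝ≥0∞} {U : Set V} {q : ℝ}

theorem lqNorm_mono (hq : 0 ≤ q) {h h' : V → ℝ≥0∞} (hh : h ≤ h') :
    lqNorm μ U q h ≤ lqNorm μ U q h' := by
  refine ENNReal.rpow_le_rpow (ENNReal.tsum_le_tsum fun x => Set.indicator_le_indicator ?_)
    (one_div_nonneg.2 hq)
  gcongr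
  exact hh x

theorem lqNorm_const_mul (hq : 0 < q) (c : ℝ≥0∞) (h : V → ℝ≥0∞) :
    lqNorm μ U q (fun x => c * h x) = c * lqNorm μ U q h := by
  simp only [lqNorm, ENNReal.mul_rpow_of_nonneg _ _ hq.le, mul_assoc, Set.indicator_const_mul,
    ENNReal.tsum_mul_left, one_div]
  rw [ENNReal.mul_rpow_of_nonneg _ _ (inv_nonneg.2 hq.le), ENNReal.rpow_rpow_inv hq.ne']

theorem lqNorm_univ_eq_top_iff (hq : 0 < q) (h : V → ℝ≥0∞) :
    lqNorm μ Set.univ q h = ⊤ ↔ ∑' x, h x ^ q * vertexWeight μ x = ⊤ := by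
  simp only [lqNorm, Set.indicator_univ, ENNReal.rpow_eq_top_iff_of_pos (one_div_pos.2 hq)]

end LqNorm

theorem ENNReal.mul_rpow_sub_one {q : ℝ} (hq : 1 ≤ q) (a : ℝ≥0∞) : a * a ^ (q - 1) = a ^ q := by
  calc a * a ^ (q - 1) = a ^ (1 : ℝ) * a ^ (q - 1) := by rw [ENNReal.rpow_one]
    _ = a ^ q := by
      rw [← ENNReal.rpow_add_of_nonneg _ _ zero_le_one (by linarith), add_sub_cancel]

section GreenQ

variable {V : Type*} {μ : V → V → ℝ≥0∞} {q : ℝ}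

theorem killedKerN_mul_greenQ_le (hq : 1 ≤ q) (hsym : ∀ x y, μ x y = μ y x)
    (hpos : ∀ x, 0 < vertexWeight μ x) (hfin : ∀ x, vertexWeight μ x < ⊤) (n : ℕ) (x y : V) :
    killedKerN μ Set.univ n y x * greenQ μ q x y ≤ ∑' z, green μ y z ^ q * vertexWeight μ z := by
  rw [greenQ, ← ENNReal.tsum_mul_left]
  refine ENNReal.tsum_le_tsum fun z => ?_
  calc killedKerN μ Set.univ n y x * (green μ x z * green μ z y ^ (q - 1) * vertexWeight μ z)
      = killedKerN μ Set.univ n y x * green μ x z * green μ y z ^ (q - 1) * vertexWeight μ z := by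
        rw [green_comm hsym hpos hfin z y]; ring
    _ ≤ green μ y z * green μ y z ^ (q - 1) * vertexWeight μ z := by
        gcongr; exact killedKerN_mul_green_le n y x z
    _ = green μ y z ^ q * vertexWeight μ z := by rw [ENNReal.mul_rpow_sub_one hq]

theorem killedKerN_mul_le_greenQ (hq : 1 ≤ q) (hsym : ∀ x y, μ x y = μ y x)
    (hpos : ∀ x, 0 < vertexWeight μ x) (hfin : ∀ x, vertexWeight μ x < ⊤) (n : ℕ) (x y : V) :
    killedKerN μ Set.univ n x y * ∑' z, green μ y z ^ q * vertexWeight μ z ≤ greenQ μ q x y := by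
  rw [greenQ, ← ENNReal.tsum_mul_left]
  refine ENNReal.tsum_le_tsum fun z => ?_
  calc killedKerN μ Set.univ n x y * (green μ y z ^ q * vertexWeight μ z)
      = killedKerN μ Set.univ n x y * green μ y z * green μ y z ^ (q - 1) * vertexWeight μ z := by
        rw [← ENNReal.mul_rpow_sub_one hq]; ring
    _ ≤ green μ x z * green μ z y ^ (q - 1) * vertexWeight μ z := by
        rw [green_comm hsym hpos hfin z y]
        gcongr
        exact killedKerN_mul_green_le n x y z

theorem greenQ_eq_top_iff (hq : 1 < q) (hsym : ∀ x y, μ x y = μ y x)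
    (hpos : ∀ x, 0 < vertexWeight μ x) (hfin : ∀ x, vertexWeight μ x < ⊤)
    (hconn : ∀ x y : V, ∃ n, 0 < killedKerN μ Set.univ n x y) (x y : V) :
    greenQ μ q x y = ⊤ ↔ lqNorm μ Set.univ q (green μ y) = ⊤ := by
  rw [lqNorm_univ_eq_top_iff (by linarith)]
  constructor
  · intro h
    obtain ⟨n, hn⟩ := hconn y x
    simpa [h, ENNReal.mul_top hn.ne'] using killedKerN_mul_greenQ_le hq.le hsym hpos hfin n x y
  · intro h
    obtain ⟨n, hn⟩ := hconn x y
    simpa [h, ENNReal.mul_top hn.ne'] using killedKerN_mul_le_greenQ hq.le hsym hpos hfin n x y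

theorem lqNorm_green_eq_top_of_eq_top (hq : 0 < q)
    (hconn : ∀ x y : V, ∃ n, 0 < killedKerN μ Set.univ n x y) {x : V} (y : V)
    (hx : lqNorm μ Set.univ q (green μ x) = ⊤) : lqNorm μ Set.univ q (green μ y) = ⊤ := by
  obtain ⟨n, hn⟩ := hconn y x
  have := lqNorm_mono (μ := μ) (U := Set.univ) hq.le (killedKerN_mul_green_le (μ := μ) n y x)
  rwa [lqNorm_const_mul hq, hx, ENNReal.mul_top hn.ne', top_le_iff] at this

end GreenQ

section Capacity

variable {V : Type*} {μ : V → V → ℝ≥0∞} {p q : ℝ}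

theorem mul_green_le_greenOp (hsym : ∀ x y, μ x y = μ y x)
    (hpos : ∀ x, 0 < vertexWeight μ x) (hfin : ∀ x, vertexWeight μ x < ⊤) (f : V → ℝ≥0∞)
    (x z : V) : f x * vertexWeight μ x * green μ x z ≤ greenOp μ Set.univ f z := by
  calc f x * vertexWeight μ x * green μ x z
      = greenKilled μ Set.univ z x * f x * vertexWeight μ x := by
        rw [green, greenKilled_comm _ hsym hpos hfin]; ring
    _ ≤ greenOp μ Set.univ f z :=
        ENNReal.le_tsum (f := fun y => greenKilled μ Set.univ z y * f y * vertexWeight μ y) x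

theorem greenOp_single [DecidableEq V] (hsym : ∀ x y, μ x y = μ y x)
    (hpos : ∀ x, 0 < vertexWeight μ x) (hfin : ∀ x, vertexWeight μ x < ⊤) (x : V) (t : ℝ≥0∞) :
    greenOp μ Set.univ (Pi.single x t) = fun z => t * vertexWeight μ x * green μ x z := by
  ext z
  rw [greenOp, tsum_eq_single x fun y hy => by simp [hy], green, greenKilled_comm _ hsym hpos hfin]
  simp only [Pi.single_eq_same]
  ring

theorem lpCap_eq_zero_of_lqNorm_green_eq_top (hp : 0 < p) (hq : 0 < q)
    (hsym : ∀ x y, μ x y = μ y x)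
    (hpos : ∀ x, 0 < vertexWeight μ x) (hfin : ∀ x, vertexWeight μ x < ⊤) (K : Finset V)
    (hK : ∀ x ∈ K, lqNorm μ Set.univ q (green μ x) = ⊤) : lpCap μ p q K Set.univ = 0 := by
  refine le_antisymm (iSup₂_le fun f ⟨_, hnorm⟩ => ?_) zero_le
  suffices hf : ∀ x ∈ K, f x = 0 by
    rw [Finset.sum_eq_zero fun x hx => by rw [hf x hx, zero_mul], ENNReal.zero_rpow_of_pos hp]
  intro x hx
  by_contra hfx
  -- the mass of `f` at `x` alone already forces `‖G f‖_q ≥ f(x) μ(x) ‖g(x,·)‖_q = ∞`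
  have hle := lqNorm_mono (μ := μ) (U := Set.univ) hq.le
    (mul_green_le_greenOp hsym hpos hfin f x)
  rw [lqNorm_const_mul hq, hK x hx, ENNReal.mul_top (mul_ne_zero hfx (hpos x).ne')] at hle
  exact absurd (hle.trans hnorm) (by simp)

theorem lpCap_singleton_ne_zero (hp : 0 < p) (hq : 0 < q) (hsym : ∀ x y, μ x y = μ y x)
    (hpos : ∀ x, 0 < vertexWeight μ x) (hfin : ∀ x, vertexWeight μ x < ⊤) (x : V)
    (hx : lqNorm μ Set.univ q (green μ x) ≠ ⊤) : lpCap μ p q {x} Set.univ ≠ 0 := by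
  classical
  set N := lqNorm μ Set.univ q (green μ x)
  have hnorm_ne_top : vertexWeight μ x * (N + 1) ≠ ⊤ :=
    ENNReal.mul_ne_top (hfin x).ne (ENNReal.add_ne_top.2 ⟨hx, ENNReal.one_ne_top⟩)
  set t := (vertexWeight μ x * (N + 1))⁻¹
  have ht : t ≠ 0 := ENNReal.inv_ne_zero.2 hnorm_ne_top
  have hadm : lqNorm μ Set.univ q (greenOp μ Set.univ (Pi.single x t)) ≤ 1 := by
    rw [greenOp_single hsym hpos hfin, lqNorm_const_mul hq]
    calc t * vertexWeight μ x * N ≤ t * (vertexWeight μ x * (N + 1)) := by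
          rw [mul_assoc]; gcongr; exact le_self_add
      _ = 1 := ENNReal.inv_mul_cancel (mul_ne_zero (hpos x).ne' (by simp)) hnorm_ne_top
  have hsupp : ∀ y, y ∉ ({x} : Finset V) → (Pi.single x t : V → ℝ≥0∞) y = 0 := fun y hy =>
    Pi.single_eq_of_ne (Finset.notMem_singleton.1 hy) _
  refine (lt_of_lt_of_le ?_ (le_iSup₂_of_le (Pi.single x t) ⟨hsupp, hadm⟩ le_rfl)).ne'
  rw [Finset.sum_singleton, Pi.single_eq_same]
  exact ENNReal.rpow_pos_of_nonneg (ENNReal.mul_pos ht (hpos x).ne') hp.le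

theorem forall_lpCap_eq_zero_iff (hp : 0 < p) (hq : 0 < q) (hsym : ∀ x y, μ x y = μ y x)
    (hpos : ∀ x, 0 < vertexWeight μ x) (hfin : ∀ x, vertexWeight μ x < ⊤) :
    (∀ K : Finset V, lpCap μ p q K Set.univ = 0) ↔
      ∀ x, lqNorm μ Set.univ q (green μ x) = ⊤ :=
  ⟨fun h x => by_contra fun hx => lpCap_singleton_ne_zero hp hq hsym hpos hfin x hx (h {x}),
    fun h K => lpCap_eq_zero_of_lqNorm_green_eq_top hp hq hsym hpos hfin K fun x _ => h x⟩

end Capacity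

theorem lpParabolic_iff_greenQ_infinite_general {V : Type*} [Infinite V]
    (μ : V → V → ℝ≥0∞)
    (hsym : ∀ x y, μ x y = μ y x)
    (hpos : ∀ x, 0 < vertexWeight μ x)
    (hfin : ∀ x, vertexWeight μ x < ⊤)
    (hconn : ∀ x y : V, ∃ n, 0 < killedKerN μ Set.univ n x y)
    (p q : ℝ) (hp : 1 < p) (hpq : 1 / p + 1 / q = 1) :
    ((∀ K : Finset V, lpCap μ p q K Set.univ = 0) ↔ ∃ x y : V, greenQ μ q x y = ⊤) ∧
    ((∀ K : Finset V, lpCap μ p q K Set.univ = 0) ↔ ∀ x y : V, greenQ μ q x y = ⊤) := by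
  have hpq' : p.HolderConjugate q :=
    Real.holderConjugate_iff.2 ⟨hp, by simpa only [one_div] using hpq⟩
  have hq : 1 < q := hpq'.symm.lt
  obtain ⟨x₀⟩ := ‹Infinite V›.nonempty
  simp only [forall_lpCap_eq_zero_iff hpq'.pos hpq'.symm.pos hsym hpos hfin,
    greenQ_eq_top_iff hq hsym hpos hfin hconn]
  exact ⟨⟨fun h => ⟨x₀, x₀, h x₀⟩,
      fun ⟨_, _, h⟩ y => lqNorm_green_eq_top_of_eq_top hpq'.symm.pos hconn y h⟩,
    ⟨fun h _ y => h y, fun h y => h x₀ y⟩⟩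

/-- for `1 < p < ∞` with conjugate `q`, an infinite connected locally
finite weighted graph is `L^p`-parabolic (all `L^p`-capacities of finite sets vanish)
iff `g_q(x,y) = ∞` for some, equivalently all, `x, y ∈ V`. -/
theorem lpParabolic_iff_greenQ_infinite {V : Type*} [Infinite V]
    (μ : V → V → ℝ≥0∞)
    (hsym : ∀ x y, μ x y = μ y x)
    (hloc : LocallyFinite' μ)
    (hpos : ∀ x, 0 < vertexWeight μ x)
    (hfin : ∀ x, vertexWeight μ x < ⊤)
    (hconn : ∀ x y : V, ∃ n, 0 < killedKerN μ Set.univ n x y)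
    (p q : ℝ) (hp : 1 < p) (hpq : 1 / p + 1 / q = 1) :
    ((∀ K : Finset V, lpCap μ p q K Set.univ = 0) ↔ ∃ x y : V, greenQ μ q x y = ⊤) ∧
    ((∀ K : Finset V, lpCap μ p q K Set.univ = 0) ↔ ∀ x y : V, greenQ μ q x y = ⊤) :=
  lpParabolic_iff_greenQ_infinite_general μ hsym hpos hfin hconn p q hp hpq
end

section
/- Let (V, μ) be a connected weighted graph with Green function g, and suppose h is a nonnegative, nonharmonic function on V satisfying −Δh ≥ 0 and Δ(|Δh|^{p−2}Δh) ≥ 0 for some 1 < p < ∞. Then, with h₁ = −Δh, the function h₁ is strictly positive, and for any x₀ ∈ V, h(x₀) ≥ ∑_{y∈V} g(x₀,y) h₁(y) μ(y); moreover g_q(x₀,x₀) < ∞ where q = p/(p−1). -/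
open scoped ENNReal

/-- The graph Laplacian `Δf(x) = ∑_y P(x,y)(f(y) − f(x))` acting on real functions. -/
noncomputable def graphLap {V : Type*} (μ : V → V → ℝ≥0∞) (f : V → ℝ) (x : V) : ℝ :=
  ∑' y, (transKer μ x y).toReal * (f y - f x)

/-! Since `|Δh|^{p-2}Δh = -h₁^{p-1}`, the function `U = h₁^{p-1}` is superharmonic; on a connected
graph a nonnegative superharmonic function vanishing at one vertex vanishes everywhere, so `U > 0`.
Superharmonicity gives the domination `g(z,x₀) U(x₀) ≤ U(z) g(x₀,x₀)` (by induction on the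
truncated Green sums `∑_{k<n} P_k(·,x₀)`), hence `g(z,x₀)^{q-1} ≤ C h₁(z)` as `(p-1)(q-1) = 1`.
Summing against `g(x₀,·) μ` reduces `g_q(x₀,x₀) < ∞` to the potential bound `G h₁ ≤ h`, which
follows from `h = h₁ + P h` by the same induction. -/

section WeightedGraph

open Finset

variable {V : Type*} {μ : V → V → ℝ≥0∞}

lemma transKer_le_one (x y : V) : transKer μ x y ≤ 1 :=
  ENNReal.div_le_of_le_mul (by rw [one_mul]; exact ENNReal.le_tsum y)

lemma transKer_ne_top (x y : V) : transKer μ x y ≠ ⊤ :=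
  ne_top_of_le_ne_top ENNReal.one_ne_top (transKer_le_one x y)

lemma tsum_transKer {x : V} (h0 : vertexWeight μ x ≠ 0) (htop : vertexWeight μ x ≠ ⊤) :
    ∑' y, transKer μ x y = 1 := by
  simp only [transKer, div_eq_mul_inv, ENNReal.tsum_mul_right]
  exact ENNReal.mul_inv_cancel h0 htop

lemma support_transKer_subset (hloc : LocallyFinite' μ) (x : V) :
    Function.support (transKer μ x) ⊆ (hloc x).toFinset := by
  intro z hz
  rw [Set.Finite.coe_toFinset, Function.mem_support]
  exact fun h => hz (by simp [transKer, h])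

lemma tsum_transKer_mul_eq_sum (hloc : LocallyFinite' μ) (f : V → ℝ≥0∞) (x : V) :
    ∑' z, transKer μ x z * f z = ∑ z ∈ (hloc x).toFinset, transKer μ x z * f z :=
  tsum_eq_sum' ((Function.support_mul_subset_left _ _).trans (support_transKer_subset hloc x))

lemma sum_toReal_transKer (hloc : LocallyFinite' μ) {x : V} (h0 : vertexWeight μ x ≠ 0)
    (htop : vertexWeight μ x ≠ ⊤) : ∑ z ∈ (hloc x).toFinset, (transKer μ x z).toReal = 1 := by
  rw [← ENNReal.toReal_sum fun z _ => transKer_ne_top x z,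
    ← tsum_eq_sum' (L := .unconditional V) (support_transKer_subset hloc x), tsum_transKer h0 htop,
    ENNReal.toReal_one]

lemma graphLap_eq_sum_sub (hloc : LocallyFinite' μ) {x : V} (h0 : vertexWeight μ x ≠ 0)
    (htop : vertexWeight μ x ≠ ⊤) (f : V → ℝ) :
    graphLap μ f x = ∑ z ∈ (hloc x).toFinset, (transKer μ x z).toReal * f z - f x := by
  have hsupp : Function.support (fun z => (transKer μ x z).toReal * (f z - f x)) ⊆
      (hloc x).toFinset := fun z hz =>
    support_transKer_subset hloc x fun h => hz (by simp [h])
  rw [graphLap, tsum_eq_sum' hsupp]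
  simp only [mul_sub, sum_sub_distrib, ← sum_mul, sum_toReal_transKer hloc h0 htop, one_mul]

lemma graphLap_neg (f : V → ℝ) (x : V) : graphLap μ (fun y => -f y) x = -graphLap μ f x := by
  rw [graphLap, graphLap, ← tsum_neg]
  exact tsum_congr fun z => by ring

lemma tsum_transKer_mul_ofReal (hloc : LocallyFinite' μ) {f : V → ℝ} (hf : ∀ z, 0 ≤ f z)
    (x : V) : ∑' z, transKer μ x z * ENNReal.ofReal (f z) =
      ENNReal.ofReal (∑ z ∈ (hloc x).toFinset, (transKer μ x z).toReal * f z) := by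
  rw [tsum_transKer_mul_eq_sum hloc,
    ENNReal.ofReal_sum_of_nonneg fun z _ => mul_nonneg ENNReal.toReal_nonneg (hf z)]
  refine sum_congr rfl fun z _ => ?_
  rw [ENNReal.ofReal_mul ENNReal.toReal_nonneg, ENNReal.ofReal_toReal (transKer_ne_top x z)]

lemma ofReal_eq_ofReal_neg_graphLap_add (hloc : LocallyFinite' μ) {x : V}
    (h0 : vertexWeight μ x ≠ 0) (htop : vertexWeight μ x ≠ ⊤) {f : V → ℝ} (hf : ∀ z, 0 ≤ f z)
    (hfx : graphLap μ f x ≤ 0) :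
    ENNReal.ofReal (f x) =
      ENNReal.ofReal (-graphLap μ f x) + ∑' z, transKer μ x z * ENNReal.ofReal (f z) := by
  rw [tsum_transKer_mul_ofReal hloc hf, ← ENNReal.ofReal_add (neg_nonneg.2 hfx)
    (sum_nonneg fun z _ => mul_nonneg ENNReal.toReal_nonneg (hf z)),
    graphLap_eq_sum_sub hloc h0 htop]
  ring_nf

lemma abs_rpow_sub_two_mul_of_nonpos {a p : ℝ} (ha : a ≤ 0) (hp : 1 < p) :
    |a| ^ (p - 2) * a = -(-a) ^ (p - 1) := by
  rcases ha.lt_or_eq with ha | rfl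
  · rw [abs_of_neg ha, show p - 1 = p - 2 + 1 by ring, Real.rpow_add_one (by linarith)]
    ring
  · simp [Real.zero_rpow (sub_pos.2 hp).ne']

def IsSuperharmonic (μ : V → V → ℝ≥0∞) (U : V → ℝ≥0∞) : Prop :=
  ∀ x, ∑' z, transKer μ x z * U z ≤ U x

lemma isSuperharmonic_ofReal (hloc : LocallyFinite' μ) (h0 : ∀ x, vertexWeight μ x ≠ 0)
    (htop : ∀ x, vertexWeight μ x ≠ ⊤) {f : V → ℝ} (hf : ∀ z, 0 ≤ f z)
    (hΔ : ∀ x, graphLap μ f x ≤ 0) : IsSuperharmonic μ fun x => ENNReal.ofReal (f x) := fun x =>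
  le_add_self.trans_eq (ofReal_eq_ofReal_neg_graphLap_add hloc (h0 x) (htop x) hf (hΔ x)).symm

lemma isSuperharmonic_ofReal_rpow_neg_graphLap (hloc : LocallyFinite' μ)
    (h0 : ∀ x, vertexWeight μ x ≠ 0) (htop : ∀ x, vertexWeight μ x ≠ ⊤) {h : V → ℝ} {p : ℝ}
    (hp : 1 < p) (hsuper : ∀ x, graphLap μ h x ≤ 0)
    (hsys : ∀ x, 0 ≤ graphLap μ (fun y => |graphLap μ h y| ^ (p - 2) * graphLap μ h y) x) :
    IsSuperharmonic μ fun x => ENNReal.ofReal ((-graphLap μ h x) ^ (p - 1)) := by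
  refine isSuperharmonic_ofReal hloc h0 htop (fun x => Real.rpow_nonneg (neg_nonneg.2 (hsuper x)) _)
    fun x => ?_
  have hpLap : (fun y => |graphLap μ h y| ^ (p - 2) * graphLap μ h y) =
      fun y => -(-graphLap μ h y) ^ (p - 1) :=
    funext fun y => abs_rpow_sub_two_mul_of_nonpos (hsuper y) hp
  simpa only [hpLap, graphLap_neg, neg_nonneg] using hsys x

open Classical in
lemma killedKerN_univ_zero (x y : V) :
    killedKerN μ Set.univ 0 x y = if x = y then 1 else 0 := by
  simp [killedKerN]

lemma tsum_killedKerN_univ_zero_mul (f : V → ℝ≥0∞) (x : V) :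
    ∑' y, killedKerN μ Set.univ 0 x y * f y = f x := by
  simp [killedKerN_univ_zero]

lemma killedKerN_univ_succ (n : ℕ) (x y : V) :
    killedKerN μ Set.univ (n + 1) x y = ∑' z, transKer μ x z * killedKerN μ Set.univ n z y := by
  simp [killedKerN, killedKer]

lemma sum_range_succ_killedKerN_univ (n : ℕ) (x y : V) :
    ∑ k ∈ range (n + 1), killedKerN μ Set.univ k x y = killedKerN μ Set.univ 0 x y +
      ∑' z, transKer μ x z * ∑ k ∈ range n, killedKerN μ Set.univ k z y := by
  simp_rw [sum_range_succ', killedKerN_univ_succ, mul_sum]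
  rw [Summable.tsum_finsetSum fun _ _ => ENNReal.summable, add_comm]

lemma green_eq_tsum_div (x y : V) :
    green μ x y = (∑' n, killedKerN μ Set.univ n x y) / vertexWeight μ y := by
  simp only [green, greenKilled, div_eq_mul_inv, ENNReal.tsum_mul_right]

lemma tsum_sum_range_killedKerN_mul_le {H H₁ : V → ℝ≥0∞}
    (hH : ∀ x, H₁ x + ∑' z, transKer μ x z * H z ≤ H x) :
    ∀ (n : ℕ) (x : V), ∑' y, (∑ k ∈ range n, killedKerN μ Set.univ k x y) * H₁ y ≤ H x
  | 0, x => by simp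
  | n + 1, x => calc
      ∑' y, (∑ k ∈ range (n + 1), killedKerN μ Set.univ k x y) * H₁ y
        = H₁ x + ∑' z, transKer μ x z *
            ∑' y, (∑ k ∈ range n, killedKerN μ Set.univ k z y) * H₁ y := by
          simp_rw [sum_range_succ_killedKerN_univ, add_mul, ENNReal.tsum_add,
            tsum_killedKerN_univ_zero_mul, ← ENNReal.tsum_mul_right, ← ENNReal.tsum_mul_left,
            mul_assoc]
          rw [ENNReal.tsum_comm]
      _ ≤ H₁ x + ∑' z, transKer μ x z * H z := by
          gcongr with z
          exact tsum_sum_range_killedKerN_mul_le hH n z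
      _ ≤ H x := hH x

lemma tsum_green_mul_le (h0 : ∀ x, vertexWeight μ x ≠ 0) (htop : ∀ x, vertexWeight μ x ≠ ⊤)
    {H H₁ : V → ℝ≥0∞} (hH : ∀ x, H₁ x + ∑' z, transKer μ x z * H z ≤ H x) (x : V) :
    ∑' y, green μ x y * H₁ y * vertexWeight μ y ≤ H x := by
  have hgreen (y : V) :
      green μ x y * H₁ y * vertexWeight μ y = ∑' n, killedKerN μ Set.univ n x y * H₁ y := by
    rw [green_eq_tsum_div, mul_right_comm, ENNReal.div_mul_cancel (h0 y) (htop y),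
      ENNReal.tsum_mul_right]
  simp_rw [hgreen]
  rw [ENNReal.tsum_comm]
  refine ENNReal.tsum_le_of_sum_range_le fun n => ?_
  rw [← Summable.tsum_finsetSum fun _ _ => ENNReal.summable]
  simp_rw [← sum_mul]
  exact tsum_sum_range_killedKerN_mul_le hH n x

section Superharmonic

variable {U : V → ℝ≥0∞} (hU : IsSuperharmonic μ U)
include hU

lemma IsSuperharmonic.eq_zero_of_killedKerN_pos :
    ∀ (n : ℕ) {x y : V}, U x = 0 → 0 < killedKerN μ Set.univ n x y → U y = 0
  | 0, x, y, hx, hxy => by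
    rw [killedKerN_univ_zero] at hxy
    split_ifs at hxy with h
    · exact h ▸ hx
    · exact absurd hxy (lt_irrefl 0)
  | n + 1, x, y, hx, hxy => by
    obtain ⟨z, hz⟩ : ∃ z, transKer μ x z * killedKerN μ Set.univ n z y ≠ 0 := by
      simpa [killedKerN_univ_succ, ENNReal.tsum_eq_zero, pos_iff_ne_zero] using hxy
    have hUz : transKer μ x z * U z = 0 :=
      ENNReal.tsum_eq_zero.1 (le_zero_iff.1 (hx ▸ hU x)) z
    exact IsSuperharmonic.eq_zero_of_killedKerN_pos n
      ((mul_eq_zero.1 hUz).resolve_left (left_ne_zero_of_mul hz))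
      (pos_iff_ne_zero.2 (right_ne_zero_of_mul hz))

lemma IsSuperharmonic.ne_zero (hconn : ∀ x y : V, ∃ n, 0 < killedKerN μ Set.univ n x y)
    {x₁ : V} (hx₁ : U x₁ ≠ 0) (x : V) : U x ≠ 0 := fun hx =>
  let ⟨n, hn⟩ := hconn x x₁
  hx₁ (hU.eq_zero_of_killedKerN_pos n hx hn)

lemma IsSuperharmonic.sum_range_killedKerN_mul_le (x₀ : V) : ∀ (n : ℕ) (z : V),
    (∑ k ∈ range n, killedKerN μ Set.univ k z x₀) * U x₀ ≤
      U z * ∑ k ∈ range n, killedKerN μ Set.univ k x₀ x₀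
  | 0, z => by simp
  | n + 1, z => by
    by_cases hz : z = x₀
    · rw [hz, mul_comm]
    calc (∑ k ∈ range (n + 1), killedKerN μ Set.univ k z x₀) * U x₀
        = ∑' w, transKer μ z w * ((∑ k ∈ range n, killedKerN μ Set.univ k w x₀) * U x₀) := by
          rw [sum_range_succ_killedKerN_univ, killedKerN_univ_zero, if_neg hz, zero_add,
            ← ENNReal.tsum_mul_right]
          simp_rw [mul_assoc]
      _ ≤ ∑' w, transKer μ z w * (U w * ∑ k ∈ range n, killedKerN μ Set.univ k x₀ x₀) :=
          ENNReal.tsum_le_tsum fun w =>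
            mul_le_mul_right (IsSuperharmonic.sum_range_killedKerN_mul_le x₀ n w) _
      _ = (∑' w, transKer μ z w * U w) * ∑ k ∈ range n, killedKerN μ Set.univ k x₀ x₀ := by
          simp_rw [← mul_assoc]
          exact ENNReal.tsum_mul_right
      _ ≤ U z * ∑ k ∈ range (n + 1), killedKerN μ Set.univ k x₀ x₀ :=
          mul_le_mul' (hU z) (sum_le_sum_of_subset (range_subset_range.2 n.le_succ))

lemma IsSuperharmonic.green_mul_le (x₀ z : V) : green μ z x₀ * U x₀ ≤ U z * green μ x₀ x₀ := by
  have htsum : (∑' n, killedKerN μ Set.univ n z x₀) * U x₀ ≤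
      U z * ∑' n, killedKerN μ Set.univ n x₀ x₀ := by
    rw [← ENNReal.tsum_mul_right]
    refine ENNReal.tsum_le_of_sum_range_le fun n => ?_
    rw [← sum_mul]
    exact (hU.sum_range_killedKerN_mul_le x₀ n z).trans (by gcongr; exact ENNReal.sum_le_tsum _)
  rw [green_eq_tsum_div, green_eq_tsum_div, div_eq_mul_inv, div_eq_mul_inv, mul_right_comm,
    ← mul_assoc]
  gcongr

lemma IsSuperharmonic.greenQ_lt_top {x₀ : V} (hUx₀ : U x₀ ≠ 0) (hUx₀_top : U x₀ ≠ ⊤)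
    (hg : green μ x₀ x₀ ≠ ⊤) {q : ℝ} (hq : 1 ≤ q)
    (hpot : ∑' z, green μ x₀ z * U z ^ (q - 1) * vertexWeight μ z ≠ ⊤) :
    greenQ μ q x₀ x₀ < ⊤ := by
  have hq' : 0 ≤ q - 1 := sub_nonneg.2 hq
  set C := green μ x₀ x₀ / U x₀
  have hgreen (z : V) : green μ z x₀ ^ (q - 1) ≤ U z ^ (q - 1) * C ^ (q - 1) := by
    rw [← ENNReal.mul_rpow_of_nonneg _ _ hq']
    gcongr
    rw [← mul_div_assoc, ENNReal.le_div_iff_mul_le (Or.inl hUx₀) (Or.inl hUx₀_top)]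
    exact hU.green_mul_le x₀ z
  calc greenQ μ q x₀ x₀
      ≤ ∑' z, green μ x₀ z * U z ^ (q - 1) * vertexWeight μ z * C ^ (q - 1) :=
        ENNReal.tsum_le_tsum fun z =>
          (mul_le_mul_left (mul_le_mul_right (hgreen z) _) _).trans_eq (by ring)
    _ = (∑' z, green μ x₀ z * U z ^ (q - 1) * vertexWeight μ z) * C ^ (q - 1) :=
        ENNReal.tsum_mul_right
    _ < ⊤ := ENNReal.mul_lt_top hpot.lt_top
        (ENNReal.rpow_lt_top_of_nonneg hq' (ENNReal.div_lt_top hg hUx₀).ne)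

end Superharmonic

end WeightedGraph

theorem nonharmonic_supersolution_greenQ_finite_general {V : Type*}
    (μ : V → V → ℝ≥0∞)
    (hloc : LocallyFinite' μ)
    (hpos : ∀ x, 0 < vertexWeight μ x)
    (hfin : ∀ x, vertexWeight μ x < ⊤)
    (hconn : ∀ x y : V, ∃ n, 0 < killedKerN μ Set.univ n x y)
    (htrans : ∀ x y, green μ x y < ⊤)
    (p q : ℝ) (hp : 1 < p) (hq : q = p / (p - 1))
    (h : V → ℝ) (hh : ∀ x, 0 ≤ h x)
    (hsuper : ∀ x, graphLap μ h x ≤ 0)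
    (hnonharm : ∃ x, graphLap μ h x ≠ 0)
    (hsys : ∀ x, 0 ≤ graphLap μ (fun y => |graphLap μ h y| ^ (p - 2) * graphLap μ h y) x) :
    (∀ x, 0 < -graphLap μ h x) ∧
    (∀ x₀ : V,
      ∑' y, green μ x₀ y * ENNReal.ofReal (-graphLap μ h y) * vertexWeight μ y ≤
        ENNReal.ofReal (h x₀)) ∧
    (∀ x₀ : V, greenQ μ q x₀ x₀ < ⊤) := by
  have hpq : p.HolderConjugate q := (Real.holderConjugate_iff_eq_conjExponent hp).2 hq
  have h0 (x : V) : vertexWeight μ x ≠ 0 := (hpos x).ne'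
  have htop (x : V) : vertexWeight μ x ≠ ⊤ := (hfin x).ne
  set h₁ : V → ℝ := fun x => -graphLap μ h x
  have h₁_nonneg (x : V) : 0 ≤ h₁ x := neg_nonneg.2 (hsuper x)
  set U : V → ℝ≥0∞ := fun x => ENNReal.ofReal (h₁ x ^ (p - 1))
  have hU : IsSuperharmonic μ U :=
    isSuperharmonic_ofReal_rpow_neg_graphLap hloc h0 htop hp hsuper hsys
  obtain ⟨x₁, hx₁⟩ := hnonharm
  have hU_ne_zero : ∀ x, U x ≠ 0 := hU.ne_zero hconn <| by
    simpa [U, h₁] using Real.rpow_pos_of_pos (neg_pos.2 ((hsuper x₁).lt_of_ne hx₁)) (p - 1)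
  have h₁_pos (x : V) : 0 < h₁ x := (h₁_nonneg x).lt_of_ne fun hx => hU_ne_zero x <| by
    simp [U, ← hx, Real.zero_rpow hpq.sub_one_ne_zero]
  have hpot (x₀ : V) :
      ∑' y, green μ x₀ y * ENNReal.ofReal (h₁ y) * vertexWeight μ y ≤ ENNReal.ofReal (h x₀) :=
    tsum_green_mul_le h0 htop
      (fun y => (ofReal_eq_ofReal_neg_graphLap_add hloc (h0 y) (htop y) hh (hsuper y)).ge) x₀
  have hpq₁ : (p - 1) * (q - 1) = 1 := by linear_combination hpq.mul_eq_add
  have hUq (z : V) : U z ^ (q - 1) = ENNReal.ofReal (h₁ z) := by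
    rw [ENNReal.ofReal_rpow_of_nonneg (Real.rpow_nonneg (h₁_nonneg z) _) hpq.symm.sub_one_pos.le,
      ← Real.rpow_mul (h₁_nonneg z), hpq₁, Real.rpow_one]
  refine ⟨h₁_pos, hpot, fun x₀ => ?_⟩
  refine hU.greenQ_lt_top (hU_ne_zero x₀) ENNReal.ofReal_ne_top (htrans x₀ x₀).ne hpq.symm.lt.le ?_
  simp_rw [hUq]
  exact ne_top_of_le_ne_top ENNReal.ofReal_ne_top (hpot x₀)

/-- if `h ≥ 0` is nonharmonic with `−Δh ≥ 0` and
`Δ(|Δh|^{p−2}Δh) ≥ 0` on a transient connected graph, then `h₁ = −Δh` is strictly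
positive, `h(x₀) ≥ ∑_y g(x₀,y) h₁(y) μ(y)` for every `x₀`, and `g_q(x₀,x₀) < ∞`
where `q = p/(p−1)`. -/
theorem nonharmonic_supersolution_greenQ_finite {V : Type*}
    (μ : V → V → ℝ≥0∞)
    (hsym : ∀ x y, μ x y = μ y x)
    (hloc : LocallyFinite' μ)
    (hpos : ∀ x, 0 < vertexWeight μ x)
    (hfin : ∀ x, vertexWeight μ x < ⊤)
    (hconn : ∀ x y : V, ∃ n, 0 < killedKerN μ Set.univ n x y)
    (htrans : ∀ x y, green μ x y < ⊤)
    (p q : ℝ) (hp : 1 < p) (hq : q = p / (p - 1))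
    (h : V → ℝ) (hh : ∀ x, 0 ≤ h x)
    (hsuper : ∀ x, graphLap μ h x ≤ 0)
    (hnonharm : ∃ x, graphLap μ h x ≠ 0)
    (hsys : ∀ x, 0 ≤ graphLap μ (fun y => |graphLap μ h y| ^ (p - 2) * graphLap μ h y) x) :
    (∀ x, 0 < -graphLap μ h x) ∧
    (∀ x₀ : V,
      ∑' y, green μ x₀ y * ENNReal.ofReal (-graphLap μ h y) * vertexWeight μ y ≤
        ENNReal.ofReal (h x₀)) ∧
    (∀ x₀ : V, greenQ μ q x₀ x₀ < ⊤) :=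
  nonharmonic_supersolution_greenQ_finite_general μ hloc hpos hfin hconn htrans p q hp hq h hh
    hsuper hnonharm hsys
end

section
/- Let G be a group with finite symmetric generating set S and Cayley graph with weights μ_{xy} = 1/|S| if x^{-1}y ∈ S. If the volume function satisfies the doubling condition V(e, 2n) ≤ C·V(e, n), then the Poincaré inequality holds: for all x₀ ∈ G, every positive integer n, and every f : G → ℝ, ∑_{x ∈ B(x₀,n)} |f(x) − f_B|² ≤ C' n² ∑_{x,y ∈ B(x₀,2n)} μ_{xy} |f(x) − f(y)|², where f_B is the average of f over B(x₀,n). -/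
/-!
Write the left-hand side as `(2 |B|)⁻¹ ∑_{x,y ∈ B} (f x - f y)²` with `B = B(x₀, n)` and index
the pairs by `z = x⁻¹ y ∈ B(e, 2n)`. For fixed `z`, a geodesic `1 = u₀, …, u_d = z` with
`d ≤ 2n` gives, by telescoping and Cauchy–Schwarz,
`(f x - f (x z))² ≤ d ∑ᵢ (f (x uᵢ) - f (x uᵢ₊₁))²`. All the points `x uᵢ` lie in `B(x₀, 2n)`,
and for fixed `i` the edges `(x uᵢ, x uᵢ₊₁)` are pairwise distinct, so summing over `x` costs
at most `d² ≤ 4n²` times the Dirichlet energy of `f` on `B(x₀, 2n)`. There are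
`V(e, 2n) ≤ C V(e, n) = C |B|` values of `z`, and the factor `|B|` cancels.
-/

open Finset

theorem sum_sq_sub_average_eq {α : Type*} (A : Finset α) (f : α → ℝ) :
    ∑ x ∈ A, (f x - (∑ y ∈ A, f y) / #A) ^ 2 =
      (∑ x ∈ A, ∑ y ∈ A, (f x - f y) ^ 2) / (2 * #A) := by
  rcases A.eq_empty_or_nonempty with rfl | hA
  · simp
  have : (#A : ℝ) ≠ 0 := by positivity
  simp only [sub_sq, sum_add_distrib, sum_sub_distrib, ← mul_sum, ← sum_mul, sum_const,
    nsmul_eq_mul, div_pow]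
  field_simp
  ring

theorem sq_sub_le_mul_sum_sq_sub (g : ℕ → ℝ) (d : ℕ) :
    (g 0 - g d) ^ 2 ≤ d * ∑ i ∈ range d, (g i - g (i + 1)) ^ 2 := by
  rw [← sum_range_sub' g d]
  simpa using sq_sum_le_card_mul_sum_sq (s := range d) (f := fun i => g i - g (i + 1))

theorem sum_sum_eq_sum_sum_filter_mul {G M : Type*} [Group G] [DecidableEq G] [AddCommMonoid M]
    {A Z : Finset G} (hZ : ∀ x ∈ A, ∀ y ∈ A, x⁻¹ * y ∈ Z) (F : G → G → M) :
    ∑ x ∈ A, ∑ y ∈ A, F x y = ∑ z ∈ Z, ∑ x ∈ A with x * z ∈ A, F x (x * z) := by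
  have hrow : ∀ x ∈ A, ∑ y ∈ A, F x y = ∑ z ∈ Z, if x * z ∈ A then F x (x * z) else 0 := by
    intro x hx
    rw [← sum_filter]
    refine sum_nbij' (x⁻¹ * ·) (x * ·) ?_ ?_ ?_ ?_ ?_ <;> intro y hy <;> simp_all
  simp_rw [sum_congr rfl hrow, sum_filter]
  exact sum_comm

namespace SimpleGraph

section Metric

variable {V V' : Type*} {Γ : SimpleGraph V} {Γ' : SimpleGraph V'}

theorem Reachable.dist_map_le (φ : Γ →g Γ') {u v : V} (h : Γ.Reachable u v) :
    Γ'.dist (φ u) (φ v) ≤ Γ.dist u v := by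
  obtain ⟨p, hp⟩ := h.exists_walk_length_eq_dist
  simpa [hp] using dist_le (p.map φ)

theorem Iso.dist_eq (φ : Γ ≃g Γ') (u v : V) : Γ'.dist (φ u) (φ v) = Γ.dist u v := by
  by_cases h : Γ.Reachable u v
  · refine (h.dist_map_le φ.toHom).antisymm ?_
    simpa using (h.map φ.toHom).dist_map_le φ.symm.toHom
  · rw [dist_eq_zero_of_not_reachable h,
      dist_eq_zero_of_not_reachable (by rwa [Iso.reachable_iff])]

theorem Walk.dist_start_getVert_le {u v : V} (p : Γ.Walk u v) (i : ℕ) :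
    Γ.dist u (p.getVert i) ≤ min i p.length := by
  simpa using dist_le (p.take i)

theorem Walk.dist_getVert_end_le {u v : V} (p : Γ.Walk u v) (i : ℕ) :
    Γ.dist (p.getVert i) v ≤ p.length - i := by
  simpa using dist_le (p.drop i)

end Metric

open Classical in
noncomputable def dirichletEnergy {V : Type*} (Γ : SimpleGraph V) (B : Finset V) (f : V → ℝ) :
    ℝ :=
  ∑ a ∈ B, ∑ b ∈ B, if Γ.Adj a b then (f a - f b) ^ 2 else 0

theorem dirichletEnergy_nonneg {V : Type*} (Γ : SimpleGraph V) (B : Finset V) (f : V → ℝ) :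
    0 ≤ Γ.dirichletEnergy B f := by
  unfold dirichletEnergy
  positivity

section Cayley

variable {G : Type*} [Group G] {s : Set G}

theorem eq_mulCayley {Γ : SimpleGraph G} (hΓ : ∀ x y, Γ.Adj x y ↔ x ≠ y ∧ x⁻¹ * y ∈ s) :
    Γ = mulCayley s := by
  ext x y
  rw [mulCayley_adj]
  refine ⟨fun h => ⟨((hΓ x y).1 h).1, .inl ((hΓ x y).1 h).2⟩, ?_⟩
  rintro ⟨hne, h | h⟩
  · exact (hΓ x y).2 ⟨hne, h⟩
  · exact ((hΓ y x).2 ⟨hne.symm, h⟩).symm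

def mulCayleyMulLeft (s : Set G) (g : G) : mulCayley s ≃g mulCayley s :=
  ⟨Equiv.mulLeft g, mulCayley_adj_mul_iff_right⟩

theorem mulCayley_dist_mul_left (g x y : G) :
    (mulCayley s).dist (g * x) (g * y) = (mulCayley s).dist x y :=
  (mulCayleyMulLeft s g).dist_eq x y

theorem mulCayley_dist_one_inv_mul (x y : G) :
    (mulCayley s).dist 1 (x⁻¹ * y) = (mulCayley s).dist x y := by
  simpa using mulCayley_dist_mul_left (s := s) x⁻¹ x y

theorem connected_mulCayley (hs : Subgroup.closure s = ⊤) : (mulCayley s).Connected := by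
  have hmul (g : G) {x y : G} (h : (mulCayley s).Reachable x y) :
      (mulCayley s).Reachable (g * x) (g * y) :=
    h.map (mulCayleyMulLeft s g).toHom
  refine (connected_iff_exists_forall_reachable _).2 ⟨1, fun g => ?_⟩
  have hg : g ∈ Subgroup.closure s := hs ▸ Subgroup.mem_top g
  induction hg using Subgroup.closure_induction with
  | mem g hg =>
    by_cases h1 : (1 : G) = g
    · exact h1 ▸ Reachable.refl 1
    · exact Adj.reachable ((mulCayley_adj s 1 g).2 ⟨h1, .inl (by simpa using hg)⟩)
  | one => exact Reachable.refl 1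
  | mul a b _ _ ha hb => exact ha.trans (by simpa using hmul a hb)
  | inv a _ ha => simpa using (hmul a⁻¹ ha).symm

theorem card_toFinset_dist_le_eq {x : G} {n : ℕ}
    (h : {y | (mulCayley s).dist x y ≤ n}.Finite) (h₁ : {y | (mulCayley s).dist 1 y ≤ n}.Finite) :
    #h.toFinset = #h₁.toFinset := by
  have hball : {y | (mulCayley s).dist x y ≤ n} = (x * ·) '' {y | (mulCayley s).dist 1 y ≤ n} := by
    ext y
    simp [Set.image_mul_left, mulCayley_dist_one_inv_mul]
  rw [← Set.ncard_eq_toFinset_card _ h, ← Set.ncard_eq_toFinset_card _ h₁, hball,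
    Set.ncard_image_of_injective _ (mul_right_injective x)]

theorem sum_sq_sub_mul_le_dirichletEnergy {a b : G} (hab : (mulCayley s).Adj a b)
    {A B : Finset G} (hA : ∀ x ∈ A, x * a ∈ B ∧ x * b ∈ B) (f : G → ℝ) :
    ∑ x ∈ A, (f (x * a) - f (x * b)) ^ 2 ≤ (mulCayley s).dirichletEnergy B f := by
  classical
  let e : G → G × G := fun x => (x * a, x * b)
  have he : Set.InjOn e A := fun x _ y _ h => mul_right_cancel (congrArg Prod.fst h)
  calc ∑ x ∈ A, (f (x * a) - f (x * b)) ^ 2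
      = ∑ q ∈ A.image e, if (mulCayley s).Adj q.1 q.2 then (f q.1 - f q.2) ^ 2 else 0 := by
        rw [sum_image he]
        exact sum_congr rfl fun x _ => (if_pos (by simpa [e] using hab)).symm
    _ ≤ ∑ q ∈ B ×ˢ B, if (mulCayley s).Adj q.1 q.2 then (f q.1 - f q.2) ^ 2 else 0 := by
        refine sum_le_sum_of_subset_of_nonneg ?_ fun _ _ _ => by positivity
        simpa [subset_iff, e] using hA
    _ = (mulCayley s).dirichletEnergy B f := by
        rw [sum_product, dirichletEnergy]
        congr!

theorem sum_sq_sub_mul_le_length_mul_dirichletEnergy {z : G} (p : (mulCayley s).Walk 1 z)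
    {A B : Finset G} (hA : ∀ x ∈ A, ∀ i, x * p.getVert i ∈ B) (f : G → ℝ) :
    ∑ x ∈ A, (f x - f (x * z)) ^ 2 ≤
      p.length * (p.length * (mulCayley s).dirichletEnergy B f) := by
  have hstep (x : G) : (f x - f (x * z)) ^ 2 ≤
      p.length * ∑ i ∈ range p.length, (f (x * p.getVert i) - f (x * p.getVert (i + 1))) ^ 2 := by
    simpa using sq_sub_le_mul_sum_sq_sub (fun i => f (x * p.getVert i)) p.length
  calc ∑ x ∈ A, (f x - f (x * z)) ^ 2
      ≤ ∑ x ∈ A, p.length *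
          ∑ i ∈ range p.length, (f (x * p.getVert i) - f (x * p.getVert (i + 1))) ^ 2 :=
        sum_le_sum fun x _ => hstep x
    _ = p.length * ∑ i ∈ range p.length,
          ∑ x ∈ A, (f (x * p.getVert i) - f (x * p.getVert (i + 1))) ^ 2 := by
        rw [← mul_sum, sum_comm]
    _ ≤ p.length * ∑ i ∈ range p.length, (mulCayley s).dirichletEnergy B f := by
        gcongr with i hi
        exact sum_sq_sub_mul_le_dirichletEnergy (p.adj_getVert_succ (mem_range.1 hi))
          (fun x hx => ⟨hA x hx i, hA x hx (i + 1)⟩) f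
    _ = p.length * (p.length * (mulCayley s).dirichletEnergy B f) := by
        rw [sum_const, card_range, nsmul_eq_mul]

theorem dist_mul_getVert_le (hconn : (mulCayley s).Connected) {x₀ x z : G} {n : ℕ}
    (p : (mulCayley s).Walk 1 z) (hx : (mulCayley s).dist x₀ x ≤ n)
    (hxz : (mulCayley s).dist x₀ (x * z) ≤ n) (i : ℕ) :
    (mulCayley s).dist x₀ (x * p.getVert i) ≤ n + p.length / 2 := by
  have h₁ := hconn.dist_triangle (u := x₀) (v := x) (w := x * p.getVert i)
  have h₂ := hconn.dist_triangle (u := x₀) (v := x * z) (w := x * p.getVert i)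
  rw [← mulCayley_dist_one_inv_mul x, inv_mul_cancel_left] at h₁
  rw [mulCayley_dist_mul_left] at h₂
  have : (mulCayley s).dist z (p.getVert i) = (mulCayley s).dist (p.getVert i) z := dist_comm
  have := p.dist_start_getVert_le i
  have := p.dist_getVert_end_le i
  omega

theorem sum_sum_sq_sub_le_card_mul_dirichletEnergy (hconn : (mulCayley s).Connected)
    (hball : ∀ (x : G) (n : ℕ), {y | (mulCayley s).dist x y ≤ n}.Finite) (x₀ : G) (n : ℕ)
    (f : G → ℝ) :
    ∑ x ∈ (hball x₀ n).toFinset, ∑ y ∈ (hball x₀ n).toFinset, (f x - f y) ^ 2 ≤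
      #(hball 1 (2 * n)).toFinset *
        ((2 * n) * ((2 * n) * (mulCayley s).dirichletEnergy (hball x₀ (2 * n)).toFinset f)) := by
  classical
  have hZ : ∀ x ∈ (hball x₀ n).toFinset, ∀ y ∈ (hball x₀ n).toFinset,
      x⁻¹ * y ∈ (hball 1 (2 * n)).toFinset := by
    simp only [Set.Finite.mem_toFinset, Set.mem_ofPred_eq, mulCayley_dist_one_inv_mul]
    intro x hx y hy
    have := hconn.dist_triangle (u := x) (v := x₀) (w := y)
    have : (mulCayley s).dist x x₀ = (mulCayley s).dist x₀ x := dist_comm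
    omega
  rw [sum_sum_eq_sum_sum_filter_mul hZ, ← nsmul_eq_mul, ← sum_const]
  refine sum_le_sum fun z hz => ?_
  obtain ⟨p, hp⟩ := hconn.exists_walk_length_eq_dist 1 z
  rw [Set.Finite.mem_toFinset, Set.mem_ofPred_eq, ← hp] at hz
  have hpath : ∀ x ∈ (hball x₀ n).toFinset.filter (· * z ∈ (hball x₀ n).toFinset), ∀ i,
      x * p.getVert i ∈ (hball x₀ (2 * n)).toFinset := by
    simp only [mem_filter, Set.Finite.mem_toFinset, Set.mem_ofPred_eq]
    intro x hx i
    have := dist_mul_getVert_le hconn p hx.1 hx.2 i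
    omega
  calc _ ≤ _ := sum_sq_sub_mul_le_length_mul_dirichletEnergy p hpath f
    _ ≤ _ := by
      have := dirichletEnergy_nonneg (mulCayley s) (hball x₀ (2 * n)).toFinset f
      have hlen : (p.length : ℝ) ≤ 2 * n := by exact_mod_cast hz
      gcongr

end Cayley

theorem dirichletEnergy_eq_card_mul_sum {G : Type*} [Group G] [DecidableEq G] {S : Finset G}
    {Γ : SimpleGraph G} (hΓ : ∀ x y, Γ.Adj x y ↔ x ≠ y ∧ x⁻¹ * y ∈ S) {w : G → G → ℝ}
    (hw : ∀ x y, w x y = if x⁻¹ * y ∈ S then 1 / (#S : ℝ) else 0) (B : Finset G) (f : G → ℝ) :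
    Γ.dirichletEnergy B f = #S * ∑ x ∈ B, ∑ y ∈ B, w x y * (f x - f y) ^ 2 := by
  rw [dirichletEnergy, mul_sum]
  refine sum_congr rfl fun x _ => ?_
  rw [mul_sum]
  refine sum_congr rfl fun y _ => ?_
  by_cases hxy : x = y
  · simp [hxy]
  by_cases hS : x⁻¹ * y ∈ S
  · have : (#S : ℝ) ≠ 0 := by exact_mod_cast (card_pos.2 ⟨_, hS⟩).ne'
    rw [if_pos ((hΓ x y).2 ⟨hxy, hS⟩), hw, if_pos hS]
    field_simp
  · simp [hΓ, hw, hS]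

end SimpleGraph

open SimpleGraph

theorem cayley_doubling_implies_poincare_general {G : Type*} [Group G] [DecidableEq G]
    (S : Finset G)
    (hgen : Subgroup.closure (S : Set G) = ⊤)
    (Γ : SimpleGraph G)
    (hΓ : ∀ x y, Γ.Adj x y ↔ x ≠ y ∧ x⁻¹ * y ∈ S)
    (hball : ∀ (x : G) (n : ℕ), {y : G | Γ.dist x y ≤ n}.Finite)
    (w : G → G → ℝ)
    (hw : ∀ x y, w x y = if x⁻¹ * y ∈ S then 1 / (S.card : ℝ) else 0)
    (C : ℝ)
    (hdoubling : ∀ n : ℕ,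
      (((hball 1 (2 * n)).toFinset.card : ℝ)) ≤ C * ((hball 1 n).toFinset.card : ℝ)) :
    ∃ C' : ℝ, 0 < C' ∧
      ∀ (x₀ : G) (n : ℕ), 0 < n → ∀ f : G → ℝ,
        ∑ x ∈ (hball x₀ n).toFinset,
            (f x - (∑ y ∈ (hball x₀ n).toFinset, f y) / ((hball x₀ n).toFinset.card : ℝ)) ^ 2 ≤
          C' * (n : ℝ) ^ 2 *
            ∑ x ∈ (hball x₀ (2 * n)).toFinset, ∑ y ∈ (hball x₀ (2 * n)).toFinset,
              w x y * (f x - f y) ^ 2 := by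
  obtain rfl : Γ = mulCayley S := eq_mulCayley hΓ
  have hcard_pos (x : G) (n : ℕ) : 0 < (#(hball x n).toFinset : ℝ) := by
    exact_mod_cast card_pos.2 ⟨x, by simp⟩
  have hC : 0 < C :=
    pos_of_mul_pos_left ((hcard_pos 1 0).trans_le (by simpa using hdoubling 0)) (hcard_pos 1 0).le
  -- `2 * C * #S` is the constant of the argument; the `+ 1` keeps it positive when `S = ∅`.
  refine ⟨2 * C * (#S + 1), by positivity, fun x₀ n _ f => ?_⟩
  set R := ∑ x ∈ (hball x₀ (2 * n)).toFinset, ∑ y ∈ (hball x₀ (2 * n)).toFinset,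
    w x y * (f x - f y) ^ 2
  have hR : 0 ≤ R := by
    simp only [R, hw]
    positivity
  have hpairs :=
    sum_sum_sq_sub_le_card_mul_dirichletEnergy (connected_mulCayley hgen) hball x₀ n f
  rw [dirichletEnergy_eq_card_mul_sum hΓ hw] at hpairs
  have hvol := card_toFinset_dist_le_eq (hball x₀ n) (hball 1 n) ▸ hdoubling n
  rw [sum_sq_sub_average_eq, div_le_iff₀ (mul_pos two_pos (hcard_pos x₀ n))]
  calc _ ≤ _ := hpairs
    _ ≤ C * #(hball x₀ n).toFinset * (2 * n * (2 * n * ((#S + 1) * R))) := by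
        gcongr
        linarith
    _ = _ := by ring

/-- on the Cayley graph of a group `G` with finite symmetric generating
set `S` and edge weights `μ_{xy} = 1/|S|` for `x⁻¹y ∈ S`, volume doubling
`V(e,2n) ≤ C V(e,n)` implies the Poincaré inequality:
`∑_{x∈B(x₀,n)} |f(x) − f_B|² ≤ C' n² ∑_{x,y∈B(x₀,2n)} μ_{xy} |f(x) − f(y)|²`. -/
theorem cayley_doubling_implies_poincare {G : Type*} [Group G] [DecidableEq G]
    (S : Finset G) (hSne : S.Nonempty)
    (hSsym : ∀ s ∈ S, s⁻¹ ∈ S)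
    (hgen : Subgroup.closure (S : Set G) = ⊤)
    (Γ : SimpleGraph G)
    (hΓ : ∀ x y, Γ.Adj x y ↔ x ≠ y ∧ x⁻¹ * y ∈ S)
    (hball : ∀ (x : G) (n : ℕ), {y : G | Γ.dist x y ≤ n}.Finite)
    (w : G → G → ℝ)
    (hw : ∀ x y, w x y = if x⁻¹ * y ∈ S then 1 / (S.card : ℝ) else 0)
    (C : ℝ)
    (hdoubling : ∀ n : ℕ,
      (((hball 1 (2 * n)).toFinset.card : ℝ)) ≤ C * ((hball 1 n).toFinset.card : ℝ)) :
    ∃ C' : ℝ, 0 < C' ∧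
      ∀ (x₀ : G) (n : ℕ), 0 < n → ∀ f : G → ℝ,
        ∑ x ∈ (hball x₀ n).toFinset,
            (f x - (∑ y ∈ (hball x₀ n).toFinset, f y) / ((hball x₀ n).toFinset.card : ℝ)) ^ 2 ≤
          C' * (n : ℝ) ^ 2 *
            ∑ x ∈ (hball x₀ (2 * n)).toFinset, ∑ y ∈ (hball x₀ (2 * n)).toFinset,
              w x y * (f x - f y) ^ 2 :=
  cayley_doubling_implies_poincare_general S hgen Γ hΓ hball w hw C hdoubling
end
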